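/- arXiv:2203.00571 — 5 statements merged into one kernel-verified Lean document; each statement's English description precedes it below -/
import Mathlib

section
/- For every integer n ≥ 2 and every a ∈ ℝ^{n-1}: ‖a‖_{l^∞_n} ≤ √π · ‖(-A_n)^{1/2} a‖_{l²_n}. -/
noncomputable section

open Real Matrix Finset

/-- The matrix form `A_n` of the discrete Dirichlet Laplacian with mesh size `h = π/n`:
the `(n-1)×(n-1)` matrix `(n²/π²)·tridiag(1, -2, 1)`. -/
def disLap (n : ℕ) : Matrix (Fin (n - 1)) (Fin (n - 1)) ℝ :=
  Matrix.of fun i j =>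
    ((n : ℝ) ^ 2 / Real.pi ^ 2) *
      (if (i : ℕ) = (j : ℕ) then -2
       else if (i : ℕ) + 1 = (j : ℕ) ∨ (j : ℕ) + 1 = (i : ℕ) then 1 else 0)

/-- Discrete `l²_n` norm `‖a‖ = ((π/n) Σ_{i=1}^{n-1} a_i²)^{1/2}`. -/
def l2n (n : ℕ) (a : Fin (n - 1) → ℝ) : ℝ :=
  Real.sqrt ((Real.pi / n) * ∑ i, (a i) ^ 2)

/-- Discrete `l^∞_n` norm `‖a‖ = max_{1≤i≤n-1} |a_i|`. -/
def linfn (n : ℕ) (a : Fin (n - 1) → ℝ) : ℝ := ⨆ i, |a i|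

/-- Extension of `a` by zero boundary values: `uext a k = a (k-1)` for `1 ≤ k ≤ m`, else `0`. -/
def uext {m : ℕ} (a : Fin m → ℝ) (k : ℕ) : ℝ :=
  if h : 1 ≤ k ∧ k ≤ m then a ⟨k - 1, by omega⟩ else 0

lemma uext_pos {m : ℕ} (a : Fin m → ℝ) (k : ℕ) (h1 : 1 ≤ k) (h2 : k ≤ m) :
    uext a k = a ⟨k - 1, by omega⟩ := dif_pos ⟨h1, h2⟩

lemma uext_neg {m : ℕ} (a : Fin m → ℝ) (k : ℕ) (h : ¬(1 ≤ k ∧ k ≤ m)) :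
    uext a k = 0 := dif_neg h

lemma uext_succ {m : ℕ} (a : Fin m → ℝ) (i : Fin m) : uext a ((i : ℕ) + 1) = a i := by
  rw [uext_pos a _ (by omega) (by omega : (i : ℕ) + 1 ≤ m)]
  · exact congrArg a (Fin.ext rfl)

lemma sum_ite_val {m : ℕ} (v : ℕ) (f : Fin m → ℝ) :
    ∑ j : Fin m, (if (j : ℕ) = v then f j else 0) = if h : v < m then f ⟨v, h⟩ else 0 := by
  split
  · next h =>
    rw [Finset.sum_eq_single_of_mem ⟨v, h⟩ (Finset.mem_univ _)]
    · simp
    · intro b _ hb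
      exact if_neg fun hvb => hb (Fin.ext hvb)
  · next h =>
    apply Finset.sum_eq_zero
    intro j _
    apply if_neg
    intro hj
    exact h (lt_of_eq_of_lt hj.symm j.isLt)

lemma quad_eq (m : ℕ) (u : ℕ → ℝ) (h0 : u 0 = 0) (hm : u (m + 1) = 0) :
    ∑ k ∈ Finset.range m, u (k + 1) * (2 * u (k + 1) - u k - u (k + 2)) =
      ∑ k ∈ Finset.range (m + 1), (u (k + 1) - u k) ^ 2 := by
  have e1 : ∑ k ∈ Finset.range (m + 1), (u (k + 1)) ^ 2
      = ∑ k ∈ Finset.range m, (u (k + 1)) ^ 2 := by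
    rw [Finset.sum_range_succ, hm]; ring
  have e2 : ∑ k ∈ Finset.range (m + 1), (u k) ^ 2
      = ∑ k ∈ Finset.range m, (u (k + 1)) ^ 2 := by
    rw [Finset.sum_range_succ', h0]; ring
  have e3 : ∑ k ∈ Finset.range (m + 1), u k * u (k + 1)
      = ∑ k ∈ Finset.range m, u k * u (k + 1) := by
    rw [Finset.sum_range_succ, hm]; ring
  have e4 : ∑ k ∈ Finset.range (m + 1), u k * u (k + 1)
      = ∑ k ∈ Finset.range m, u (k + 1) * u (k + 2) := by
    rw [Finset.sum_range_succ', h0]; ring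
  have hL : ∑ k ∈ Finset.range m, u (k + 1) * (2 * u (k + 1) - u k - u (k + 2))
      = 2 * (∑ k ∈ Finset.range m, (u (k + 1)) ^ 2)
        - (∑ k ∈ Finset.range m, u k * u (k + 1))
        - (∑ k ∈ Finset.range m, u (k + 1) * u (k + 2)) := by
    rw [Finset.mul_sum, ← Finset.sum_sub_distrib, ← Finset.sum_sub_distrib]
    exact Finset.sum_congr rfl fun k _ => by ring
  have hR : ∑ k ∈ Finset.range (m + 1), (u (k + 1) - u k) ^ 2
      = (∑ k ∈ Finset.range (m + 1), (u (k + 1)) ^ 2)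
        + (∑ k ∈ Finset.range (m + 1), (u k) ^ 2)
        - 2 * (∑ k ∈ Finset.range (m + 1), u k * u (k + 1)) := by
    rw [Finset.mul_sum, ← Finset.sum_add_distrib, ← Finset.sum_sub_distrib]
    exact Finset.sum_congr rfl fun k _ => by ring
  linarith [hL, hR, e1, e2, e3, e4]

/-- For every `n ≥ 2` and `a ∈ ℝ^{n-1}`: `‖a‖_{l^∞_n} ≤ √π ‖(-A_n)^{1/2} a‖_{l²_n}`,
where `S = (-A_n)^{1/2}` is the (unique) symmetric positive definite square root of `-A_n`. -/
theorem stmt1 (n : ℕ) (hn : 2 ≤ n) (a : Fin (n - 1) → ℝ)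
    (S : Matrix (Fin (n - 1)) (Fin (n - 1)) ℝ) (hS : S.PosDef)
    (hSS : S * S = -(disLap n)) :
    linfn n a ≤ Real.sqrt Real.pi * l2n n (S.mulVec a) := by
  have hm1 : 1 ≤ n - 1 := by omega
  have hnm : n = (n - 1) + 1 := by omega
  set u : ℕ → ℝ := uext a with hu
  have hu0 : u 0 = 0 := uext_neg a 0 (by omega)
  have hun : u ((n - 1) + 1) = 0 := uext_neg a _ (by omega)
  -- Step A: row computation
  have rowA : ∀ i : Fin (n - 1), ((-(disLap n)).mulVec a) i
      = ((n : ℝ) ^ 2 / Real.pi ^ 2) * (2 * u ((i : ℕ) + 1) - u (i : ℕ) - u ((i : ℕ) + 2)) := by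
    intro i
    have hsplit : ∀ j : Fin (n - 1),
        (if (i : ℕ) = (j : ℕ) then (-2 : ℝ)
          else if (i : ℕ) + 1 = (j : ℕ) ∨ (j : ℕ) + 1 = (i : ℕ) then 1 else 0) * a j
        = (if (j : ℕ) = (i : ℕ) then (-2) * a j else 0)
          + (if (j : ℕ) = (i : ℕ) + 1 then a j else 0)
          + (if (i : ℕ) = 0 then 0 else if (j : ℕ) = (i : ℕ) - 1 then a j else 0) := by
      intro j
      split_ifs <;> first | omega | ring
    have hrow : (disLap n).mulVec a i
        = ((n : ℝ) ^ 2 / Real.pi ^ 2) *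
          ∑ j : Fin (n - 1), ((if (j : ℕ) = (i : ℕ) then (-2) * a j else 0)
          + (if (j : ℕ) = (i : ℕ) + 1 then a j else 0)
          + (if (i : ℕ) = 0 then 0 else if (j : ℕ) = (i : ℕ) - 1 then a j else 0)) := by
      rw [Matrix.mulVec, dotProduct, Finset.mul_sum]
      apply Finset.sum_congr rfl
      intro j _
      show ((n : ℝ) ^ 2 / Real.pi ^ 2) * _ * a j = _
      rw [mul_assoc, hsplit j]
    rw [Matrix.neg_mulVec]
    show -((disLap n).mulVec a i) = _
    rw [hrow, Finset.sum_add_distrib, Finset.sum_add_distrib,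
      sum_ite_val (i : ℕ) (fun j => (-2) * a j), sum_ite_val ((i : ℕ) + 1) (fun j => a j)]
    have t1 : (if h : (i : ℕ) < n - 1 then (-2) * a ⟨(i : ℕ), h⟩ else 0)
        = (-2) * u ((i : ℕ) + 1) := by
      rw [dif_pos i.isLt, hu, uext_succ a i]
    have t2 : (if h : (i : ℕ) + 1 < n - 1 then a ⟨(i : ℕ) + 1, h⟩ else 0) = u ((i : ℕ) + 2) := by
      by_cases h : (i : ℕ) + 1 < n - 1
      · rw [dif_pos h, hu, uext_pos a ((i : ℕ) + 2) (by omega) (by omega)]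
        exact congrArg a (Fin.ext rfl)
      · rw [dif_neg h, hu, uext_neg a ((i : ℕ) + 2) (by omega)]
    have t3 : (∑ j : Fin (n - 1), if (i : ℕ) = 0 then (0 : ℝ)
        else if (j : ℕ) = (i : ℕ) - 1 then a j else 0) = u (i : ℕ) := by
      by_cases h : (i : ℕ) = 0
      · rw [h, hu, uext_neg a 0 (by omega)]
        simp
      · simp only [if_neg h]
        rw [sum_ite_val ((i : ℕ) - 1) (fun j => a j),
          dif_pos (by omega : (i : ℕ) - 1 < n - 1), hu,
          uext_pos a (i : ℕ) (by omega) (by omega)]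
    rw [t1, t2, t3]
    ring
  -- symmetry of S
  have hsym : Sᵀ = S := by
    have := hS.isHermitian
    simpa [Matrix.IsHermitian] using this
  -- the quadratic form
  have hQ : (S.mulVec a) ⬝ᵥ (S.mulVec a)
      = ((n : ℝ) ^ 2 / Real.pi ^ 2) * ∑ k ∈ Finset.range n, (u (k + 1) - u k) ^ 2 := by
    have h1 : (S.mulVec a) ⬝ᵥ (S.mulVec a) = a ⬝ᵥ ((-(disLap n)).mulVec a) := by
      rw [Matrix.dotProduct_mulVec, ← Matrix.mulVec_transpose, hsym,
        Matrix.mulVec_mulVec, hSS, dotProduct_comm]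
    rw [h1]
    have h2 : a ⬝ᵥ ((-(disLap n)).mulVec a)
        = ((n : ℝ) ^ 2 / Real.pi ^ 2) * ∑ i : Fin (n - 1),
            u ((i : ℕ) + 1) * (2 * u ((i : ℕ) + 1) - u (i : ℕ) - u ((i : ℕ) + 2)) := by
      rw [dotProduct, Finset.mul_sum]
      apply Finset.sum_congr rfl
      intro i _
      rw [rowA i, ← uext_succ a i, ← hu]
      ring
    rw [h2,
      Fin.sum_univ_eq_sum_range (fun k => u (k + 1) * (2 * u (k + 1) - u k - u (k + 2))) (n - 1),
      quad_eq (n - 1) u hu0 hun, ← hnm]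
  -- final bound
  have hπ : (0 : ℝ) < Real.pi := Real.pi_pos
  have hn0 : (0 : ℝ) < (n : ℝ) := by positivity
  have hDnn : (0 : ℝ) ≤ ∑ k ∈ Finset.range n, (u (k + 1) - u k) ^ 2 :=
    Finset.sum_nonneg fun k _ => sq_nonneg _
  have key : ∀ i : Fin (n - 1), |a i| ≤ Real.sqrt Real.pi * l2n n (S.mulVec a) := by
    intro i
    have hai : a i = ∑ k ∈ Finset.range ((i : ℕ) + 1), (u (k + 1) - u k) := by
      rw [Finset.sum_range_sub u ((i : ℕ) + 1), hu0, sub_zero, hu, uext_succ a i]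
    have cs : (a i) ^ 2
        ≤ ((i : ℕ) + 1) * ∑ k ∈ Finset.range ((i : ℕ) + 1), (u (k + 1) - u k) ^ 2 := by
      rw [hai]
      have := Finset.sum_mul_sq_le_sq_mul_sq (Finset.range ((i : ℕ) + 1))
        (fun _ => (1 : ℝ)) (fun k => u (k + 1) - u k)
      simpa using this
    have hsub : ∑ k ∈ Finset.range ((i : ℕ) + 1), (u (k + 1) - u k) ^ 2
        ≤ ∑ k ∈ Finset.range n, (u (k + 1) - u k) ^ 2 := by
      apply Finset.sum_le_sum_of_subset_of_nonneg
      · exact Finset.range_subset_range.mpr (by omega)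
      · intro k _ _; exact sq_nonneg _
    have hiq : (a i) ^ 2 ≤ (n : ℝ) * ∑ k ∈ Finset.range n, (u (k + 1) - u k) ^ 2 := by
      have h1 : ((i : ℕ) + 1 : ℝ) ≤ (n : ℝ) := by
        exact_mod_cast (by have := i.isLt; omega : (i : ℕ) + 1 ≤ n)
      calc (a i) ^ 2 ≤ ((i : ℕ) + 1) * ∑ k ∈ Finset.range ((i : ℕ) + 1), (u (k + 1) - u k) ^ 2 :=
            cs
        _ ≤ (n : ℝ) * ∑ k ∈ Finset.range n, (u (k + 1) - u k) ^ 2 :=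
            mul_le_mul h1 hsub (Finset.sum_nonneg fun k _ => sq_nonneg _) (le_of_lt hn0)
    have hl2 : Real.sqrt Real.pi * l2n n (S.mulVec a)
        = Real.sqrt (Real.pi * ((Real.pi / n) * ∑ j, ((S.mulVec a) j) ^ 2)) := by
      rw [l2n, ← Real.sqrt_mul (le_of_lt hπ)]
    rw [hl2]
    have hsum : ∑ j, ((S.mulVec a) j) ^ 2
        = ((n : ℝ) ^ 2 / Real.pi ^ 2) * ∑ k ∈ Finset.range n, (u (k + 1) - u k) ^ 2 := by
      rw [← hQ, dotProduct]
      exact Finset.sum_congr rfl fun j _ => by ring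
    rw [hsum]
    have harith : Real.pi * ((Real.pi / n) *
        (((n : ℝ) ^ 2 / Real.pi ^ 2) * ∑ k ∈ Finset.range n, (u (k + 1) - u k) ^ 2))
        = (n : ℝ) * ∑ k ∈ Finset.range n, (u (k + 1) - u k) ^ 2 := by
      field_simp
    rw [harith]
    calc |a i| = Real.sqrt ((a i) ^ 2) := (Real.sqrt_sq_eq_abs _).symm
      _ ≤ Real.sqrt ((n : ℝ) * ∑ k ∈ Finset.range n, (u (k + 1) - u k) ^ 2) :=
          Real.sqrt_le_sqrt hiq
  rw [linfn]
  have : Nonempty (Fin (n - 1)) := ⟨⟨0, by omega⟩⟩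
  exact ciSup_le key
end
end

section
/- There exists a constant C > 0, independent of n, such that for every integer n ≥ 2 and every a ∈ ℝ^{n-1}: ‖a‖_{l^∞_n} ≤ C ‖(-A_n)^{1/2} a‖^{1/2}_{l²_n} ‖a‖^{1/2}_{l²_n}, and ‖a‖_{l^6_n} ≤ C ‖A_n a‖^{1/6}_{l²_n} ‖a‖^{5/6}_{l²_n}. -/
noncomputable section

open Real Matrix Finset

/-- Discrete `l^p_n` norm `‖a‖ = ((π/n) Σ_{i=1}^{n-1} |a_i|^p)^{1/p}` for `1 ≤ p < ∞`. -/
def lpn (n : ℕ) (p : ℝ) (a : Fin (n - 1) → ℝ) : ℝ :=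
  ((Real.pi / n) * ∑ i, |a i| ^ p) ^ (1 / p)

namespace Stmt2Aux

/-- zero-extension of `a : Fin (n-1) → ℝ` to `ℕ`, satisfying `zext (j+1) = a j`. -/
def zext (n : ℕ) (a : Fin (n-1) → ℝ) : ℕ → ℝ :=
  fun i => if h : i - 1 < n - 1 ∧ 1 ≤ i then a ⟨i-1, h.1⟩ else 0

variable {n : ℕ} {a : Fin (n-1) → ℝ}

lemma zext_zero : zext n a 0 = 0 := by simp [zext]

lemma zext_of_ge {i : ℕ} (hn : 2 ≤ n) (hi : n ≤ i) : zext n a i = 0 := by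
  rw [zext, dif_neg]; omega

lemma zext_succ {j : ℕ} (h : j < n - 1) : zext n a (j+1) = a ⟨j, h⟩ := by
  rw [zext, dif_pos ⟨by omega, by omega⟩]; congr 1

/-- summation-by-parts / quadratic form identity for sequences vanishing at the ends -/
lemma quad_id (b : ℕ → ℝ) (N : ℕ) (h0 : b 0 = 0) (h1 : b (N+1) = 0) (h2 : b (N+2) = 0) :
    ∑ i ∈ range (N+1), (b (i+1) - b i)^2
      = ∑ i ∈ range (N+1), b (i+1) * (2 * b (i+1) - b i - b (i+2)) := by
  have key : ∀ i, (b (i+1) - b i)^2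
      = b (i+1) * (2 * b (i+1) - b i - b (i+2))
        + ((b i ^2 - b i * b (i+1)) - (b (i+1) ^2 - b (i+1) * b (i+2))) := by
    intro i; ring
  calc ∑ i ∈ range (N+1), (b (i+1) - b i)^2
      = ∑ i ∈ range (N+1), (b (i+1) * (2 * b (i+1) - b i - b (i+2)))
        + ∑ i ∈ range (N+1), ((b i ^2 - b i * b (i+1)) - (b (i+1) ^2 - b (i+1) * b (i+2))) := by
        rw [← Finset.sum_add_distrib]; exact Finset.sum_congr rfl fun i _ => key i
    _ = ∑ i ∈ range (N+1), b (i+1) * (2 * b (i+1) - b i - b (i+2)) := by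
        rw [Finset.sum_range_sub' (fun i => b i ^2 - b i * b (i+1)) (N+1)]
        simp [h0, h1, h2]

/-- discrete Gagliardo-Nirenberg pointwise bound -/
lemma gn_pointwise (b : ℕ → ℝ) (n k : ℕ) (hk : k ≤ n) (h0 : b 0 = 0) :
    (b k)^2 ≤ 2 * Real.sqrt (∑ i ∈ range n, (b (i+1) - b i)^2)
      * Real.sqrt (∑ i ∈ range (n+1), (b i)^2) := by
  set Q := ∑ i ∈ range n, (b (i+1) - b i)^2 with hQ
  set T := ∑ i ∈ range (n+1), (b i)^2 with hT
  have hQ0 : 0 ≤ Q := Finset.sum_nonneg fun i _ => sq_nonneg _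
  have hT0 : 0 ≤ T := Finset.sum_nonneg fun i _ => sq_nonneg _
  set Sm := ∑ i ∈ range n, |b (i+1) - b i| * (|b i| + |b (i+1)|) with hSm
  have hbk : (b k)^2 ≤ Sm := by
    have h1 : (b k)^2 = ∑ i ∈ range k, ((b (i+1))^2 - (b i)^2) := by
      rw [Finset.sum_range_sub (fun i => (b i)^2) k, h0]; ring
    have h2 : ∑ i ∈ range k, ((b (i+1))^2 - (b i)^2)
        ≤ ∑ i ∈ range k, |b (i+1) - b i| * (|b i| + |b (i+1)|) := by
      apply Finset.sum_le_sum
      intro i _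
      have : (b (i+1))^2 - (b i)^2 = (b (i+1) - b i) * (b i + b (i+1)) := by ring
      rw [this]
      calc (b (i+1) - b i) * (b i + b (i+1)) ≤ |(b (i+1) - b i) * (b i + b (i+1))| := le_abs_self _
        _ = |b (i+1) - b i| * |b i + b (i+1)| := abs_mul _ _
        _ ≤ |b (i+1) - b i| * (|b i| + |b (i+1)|) := by
            apply mul_le_mul_of_nonneg_left (abs_add_le _ _) (abs_nonneg _)
    have h3 : ∑ i ∈ range k, |b (i+1) - b i| * (|b i| + |b (i+1)|) ≤ Sm := by
      apply Finset.sum_le_sum_of_subset_of_nonneg (Finset.range_subset_range.2 hk)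
      intro i _ _
      exact mul_nonneg (abs_nonneg _) (by positivity)
    calc (b k)^2 = _ := h1
      _ ≤ _ := h2
      _ ≤ Sm := h3
  have hSm0 : 0 ≤ Sm := le_trans (sq_nonneg _) hbk
  have hCS : Sm^2 ≤ Q * (4 * T) := by
    have := Finset.sum_mul_sq_le_sq_mul_sq (range n) (fun i => |b (i+1) - b i|)
      (fun i => |b i| + |b (i+1)|)
    simp only [sq_abs] at this
    refine le_trans this ?_
    have hg : ∑ i ∈ range n, (|b i| + |b (i+1)|)^2 ≤ 4 * T := by
      have hgb : ∀ i ∈ range n, (|b i| + |b (i+1)|)^2 ≤ 2 * (b i)^2 + 2 * (b (i+1))^2 := by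
        intro i _
        have h := sq_nonneg (|b i| - |b (i+1)|)
        nlinarith [sq_abs (b i), sq_abs (b (i+1))]
      refine le_trans (Finset.sum_le_sum hgb) ?_
      rw [Finset.sum_add_distrib, ← Finset.mul_sum, ← Finset.mul_sum]
      have e1 : ∑ i ∈ range n, (b i)^2 ≤ T :=
        Finset.sum_le_sum_of_subset_of_nonneg (Finset.range_subset_range.2 (Nat.le_succ n))
          (fun i _ _ => sq_nonneg _)
      have e2 : ∑ i ∈ range n, (b (i+1))^2 ≤ T := by
        have : ∑ i ∈ range (n+1), (b i)^2 = ∑ i ∈ range n, (b (i+1))^2 + (b 0)^2 :=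
          Finset.sum_range_succ' _ n
        rw [hT, this, h0]; nlinarith []
      nlinarith []
    have : Q * ∑ i ∈ range n, (|b i| + |b (i+1)|)^2 ≤ Q * (4 * T) :=
      mul_le_mul_of_nonneg_left hg hQ0
    exact this
  have : Sm ≤ 2 * Real.sqrt Q * Real.sqrt T := by
    have h4 : Real.sqrt (Sm^2) ≤ Real.sqrt (Q * (4*T)) := Real.sqrt_le_sqrt hCS
    rw [Real.sqrt_sq hSm0] at h4
    refine le_trans h4 (le_of_eq ?_)
    rw [show Q * (4*T) = (2*2) * (Q * T) by ring]
    rw [Real.sqrt_mul (by norm_num), Real.sqrt_mul hQ0,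
      show (2:ℝ)*2 = 2^2 by norm_num, Real.sqrt_sq (by norm_num)]
    ring
  exact le_trans hbk this

lemma sum_ite_shift_up (j : Fin (n-1)) :
    ∑ k : Fin (n-1), (if (j:ℕ)+1 = (k:ℕ) then a k else 0) = zext n a ((j:ℕ)+2) := by
  by_cases hj : (j:ℕ)+1 < n-1
  · have h1 : zext n a ((j:ℕ)+2) = a ⟨(j:ℕ)+1, hj⟩ := zext_succ hj
    have h2 : ∑ k : Fin (n-1), (if (j:ℕ)+1 = (k:ℕ) then a k else 0)
        = ∑ k : Fin (n-1), (if k = ⟨(j:ℕ)+1, hj⟩ then a k else 0) := by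
      apply Finset.sum_congr rfl; intro k _; congr 1
      simp only [eq_comm (a := (j:ℕ)+1), Fin.ext_iff]
    rw [h1, h2, Finset.sum_ite_eq' Finset.univ, if_pos (Finset.mem_univ _)]
  · rw [show zext n a ((j:ℕ)+2) = 0 by rw [zext, dif_neg]; omega]
    apply Finset.sum_eq_zero
    intro k _
    rw [if_neg]
    have := k.isLt; omega

lemma sum_ite_shift_down (j : Fin (n-1)) :
    ∑ k : Fin (n-1), (if (k:ℕ)+1 = (j:ℕ) then a k else 0) = zext n a (j:ℕ) := by
  by_cases hj : 1 ≤ (j:ℕ)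
  · have hlt : (j:ℕ)-1 < n-1 := by have := j.isLt; omega
    have h1 : zext n a (j:ℕ) = a ⟨(j:ℕ)-1, hlt⟩ := by
      rw [zext, dif_pos ⟨hlt, hj⟩]
    have h2 : ∑ k : Fin (n-1), (if (k:ℕ)+1 = (j:ℕ) then a k else 0)
        = ∑ k : Fin (n-1), (if k = ⟨(j:ℕ)-1, hlt⟩ then a k else 0) := by
      apply Finset.sum_congr rfl; intro k _
      refine if_congr ?_ rfl rfl
      simp only [Fin.ext_iff, Fin.val_mk]
      constructor <;> omega
    rw [h1, h2, Finset.sum_ite_eq' Finset.univ, if_pos (Finset.mem_univ _)]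
  · rw [show zext n a (j:ℕ) = 0 by rw [zext, dif_neg]; omega]
    apply Finset.sum_eq_zero
    intro k _
    rw [if_neg]; omega

lemma mulVec_neg_disLap (j : Fin (n-1)) :
    ((-(disLap n)) *ᵥ a) j
      = ((n:ℝ)^2/Real.pi^2) *
        (2 * zext n a ((j:ℕ)+1) - zext n a (j:ℕ) - zext n a ((j:ℕ)+2)) := by
  rw [Matrix.neg_mulVec, Pi.neg_apply]
  have hm : (disLap n *ᵥ a) j = ∑ k, disLap n j k * a k := rfl
  rw [hm]
  have key : ∀ k : Fin (n-1), disLap n j k * a k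
      = ((n:ℝ)^2/Real.pi^2) *
        ((-2) * (if (j:ℕ) = (k:ℕ) then a k else 0)
          + (if (j:ℕ)+1 = (k:ℕ) then a k else 0)
          + (if (k:ℕ)+1 = (j:ℕ) then a k else 0)) := by
    intro k
    simp only [disLap, Matrix.of_apply]
    split_ifs with h1 h2 h3 h4 h5 h6 h7 <;> first | omega | ring
  rw [Finset.sum_congr rfl (fun k _ => key k), ← Finset.mul_sum]
  rw [Finset.sum_add_distrib, Finset.sum_add_distrib, ← Finset.mul_sum]
  have e1 : ∑ k : Fin (n-1), (if (j:ℕ) = (k:ℕ) then a k else 0) = a j := by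
    have h2 : ∑ k : Fin (n-1), (if (j:ℕ) = (k:ℕ) then a k else 0)
        = ∑ k : Fin (n-1), (if k = j then a k else 0) := by
      apply Finset.sum_congr rfl; intro k _; congr 1
      simp only [eq_comm (a := (j:ℕ)), Fin.ext_iff]
    rw [h2, Finset.sum_ite_eq' Finset.univ, if_pos (Finset.mem_univ _)]
  rw [e1, sum_ite_shift_up, sum_ite_shift_down]
  have e2 : a j = zext n a ((j:ℕ)+1) := by rw [zext_succ j.isLt]
  rw [e2]; ring

lemma sum_sq_zext (hn : 2 ≤ n) :
    ∑ i ∈ range (n+1), (zext n a i)^2 = ∑ j, (a j)^2 := by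
  have hn1 : n - 1 + 1 = n := by omega
  rw [Finset.sum_range_succ' (fun i => (zext n a i)^2) n, zext_zero]
  have hsplit := Finset.sum_range_succ (fun i => (zext n a (i+1))^2) (n-1)
  rw [hn1] at hsplit
  rw [hsplit, show zext n a n = 0 from zext_of_ge hn le_rfl]
  have : ∑ j : Fin (n-1), (a j)^2 = ∑ j : Fin (n-1), (fun i => (zext n a (i+1))^2) (j:ℕ) := by
    apply Finset.sum_congr rfl
    intro j _
    simp only
    rw [zext_succ j.isLt]
  rw [this, Fin.sum_univ_eq_sum_range (fun i => (zext n a (i+1))^2) (n-1)]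
  norm_num

lemma quadform (hn : 2 ≤ n) :
    a ⬝ᵥ ((-(disLap n)) *ᵥ a)
      = ((n:ℝ)^2/Real.pi^2) * ∑ i ∈ range n, (zext n a (i+1) - zext n a i)^2 := by
  set b := zext n a with hb
  set c := ((n:ℝ)^2/Real.pi^2) with hc
  have key : ∀ j : Fin (n-1), a j * ((-(disLap n)) *ᵥ a) j
      = (fun i : ℕ => c * (b (i+1) * (2 * b (i+1) - b i - b (i+2)))) (j:ℕ) := by
    intro j
    rw [mulVec_neg_disLap j]
    simp only
    rw [show a j = b ((j:ℕ)+1) by rw [hb, zext_succ j.isLt]]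
    ring
  have hdot : a ⬝ᵥ ((-(disLap n)) *ᵥ a) = ∑ j : Fin (n-1), a j * ((-(disLap n)) *ᵥ a) j := rfl
  rw [hdot, Finset.sum_congr rfl (fun j _ => key j),
    Fin.sum_univ_eq_sum_range (fun i : ℕ => c * (b (i+1) * (2 * b (i+1) - b i - b (i+2)))) (n-1)]
  have hext : ∑ i ∈ range n, c * (b (i+1) * (2 * b (i+1) - b i - b (i+2)))
      = ∑ i ∈ range (n-1), c * (b (i+1) * (2 * b (i+1) - b i - b (i+2))) := by
    have hn1 : n - 1 + 1 = n := by omega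
    have hsplit := Finset.sum_range_succ
      (fun i => c * (b (i+1) * (2 * b (i+1) - b i - b (i+2)))) (n-1)
    rw [hn1] at hsplit
    rw [hsplit, show b n = 0 from zext_of_ge hn le_rfl]
    simp
  rw [← hext]
  have hqi := quad_id b (n-1) zext_zero
    (by rw [show (n-1)+1 = n by omega]; exact zext_of_ge hn le_rfl)
    (by rw [show (n-1)+2 = n+1 by omega]; exact zext_of_ge hn (by omega))
  rw [show (n-1)+1 = n by omega] at hqi
  rw [← Finset.mul_sum, hqi]

end Stmt2Aux

open Stmt2Aux

set_option maxHeartbeats 2000000 in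
theorem stmt2_main (n : ℕ) (hn : 2 ≤ n) (a : Fin (n - 1) → ℝ)
    (S : Matrix (Fin (n - 1)) (Fin (n - 1)) ℝ) (hSpd : S.PosDef) (hSS : S * S = -(disLap n)) :
    linfn n a ≤ 2 * (l2n n (S.mulVec a)) ^ ((1 : ℝ) / 2) * (l2n n a) ^ ((1 : ℝ) / 2)
    ∧ lpn n 6 a
        ≤ 2 * (l2n n ((disLap n).mulVec a)) ^ ((1 : ℝ) / 6) * (l2n n a) ^ ((5 : ℝ) / 6) := by
  haveI : Nonempty (Fin (n-1)) := ⟨⟨0, by omega⟩⟩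
  have hπ : (0:ℝ) < Real.pi := Real.pi_pos
  have hn0 : (0:ℝ) < (n:ℝ) := by
    have : 0 < n := by omega
    exact_mod_cast this
  have hh : (0:ℝ) < Real.pi / n := div_pos hπ hn0
  set b := zext n a with hb
  set Q := ∑ i ∈ range n, (b (i+1) - b i)^2 with hQdef
  have hQ0 : 0 ≤ Q := Finset.sum_nonneg fun i _ => sq_nonneg _
  have hsumsq : (0:ℝ) ≤ ∑ j, (a j)^2 := Finset.sum_nonneg fun j _ => sq_nonneg _
  set X := l2n n (S.mulVec a) with hX
  set Y := l2n n a with hY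
  set Z := l2n n ((disLap n).mulVec a) with hZ
  have hX0 : 0 ≤ X := Real.sqrt_nonneg _
  have hY0 : 0 ≤ Y := Real.sqrt_nonneg _
  have hZ0 : 0 ≤ Z := Real.sqrt_nonneg _
  have hY2 : Y^2 = (Real.pi/n) * ∑ j, (a j)^2 :=
    Real.sq_sqrt (mul_nonneg hh.le hsumsq)
  have hdot : a ⬝ᵥ ((-(disLap n)) *ᵥ a) = ((n:ℝ)^2/Real.pi^2) * Q := quadform hn
  have hX2dot : X^2 = (Real.pi/n) * (a ⬝ᵥ ((-(disLap n)) *ᵥ a)) := by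
    have h1 : X^2 = (Real.pi/n) * ∑ j, ((S.mulVec a) j)^2 :=
      Real.sq_sqrt (mul_nonneg hh.le (Finset.sum_nonneg fun j _ => sq_nonneg _))
    have h2 : ∑ j, ((S.mulVec a) j)^2 = (S.mulVec a) ⬝ᵥ (S.mulVec a) := by
      simp [dotProduct, sq]
    have hST : Sᵀ = S := by
      have h := hSpd.isHermitian
      simp [Matrix.conjTranspose] at h
      exact h
    have h3 : (S.mulVec a) ⬝ᵥ (S.mulVec a) = a ⬝ᵥ ((S*S) *ᵥ a) := by
      rw [Matrix.dotProduct_mulVec, ← Matrix.mulVec_transpose, hST, Matrix.mulVec_mulVec,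
        dotProduct_comm]
    rw [h1, h2, h3, hSS]
  have hX2 : X^2 = ((n:ℝ)/Real.pi) * Q := by
    rw [hX2dot, hdot]
    field_simp
  have hQX : Q = (Real.pi/n) * X^2 := by
    rw [hX2]
    field_simp
  have hT : ∑ i ∈ range (n+1), (b i)^2 = ∑ j, (a j)^2 := sum_sq_zext hn
  have hTY : ∑ i ∈ range (n+1), (b i)^2 = ((n:ℝ)/Real.pi) * Y^2 := by
    rw [hT, hY2]
    field_simp
  have hsqQ : Real.sqrt Q = Real.sqrt (Real.pi/n) * X := by
    rw [hQX, Real.sqrt_mul hh.le, Real.sqrt_sq hX0]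
  have hsqT : Real.sqrt (∑ i ∈ range (n+1), (b i)^2) = Real.sqrt ((n:ℝ)/Real.pi) * Y := by
    rw [hTY, Real.sqrt_mul (le_of_lt (div_pos hn0 hπ)), Real.sqrt_sq hY0]
  have hprod : Real.sqrt (Real.pi/n) * Real.sqrt ((n:ℝ)/Real.pi) = 1 := by
    rw [← Real.sqrt_mul hh.le, show (Real.pi/n) * ((n:ℝ)/Real.pi) = 1 by field_simp]
    exact Real.sqrt_one
  have hM : ∀ j : Fin (n-1), (a j)^2 ≤ 2 * (X * Y) := by
    intro j
    have hk : (j:ℕ)+1 ≤ n := by have := j.isLt; omega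
    have hgn := gn_pointwise b n ((j:ℕ)+1) hk zext_zero
    have hbj : b ((j:ℕ)+1) = a j := by rw [hb, zext_succ j.isLt]
    rw [hbj, ← hQdef, hsqQ, hsqT] at hgn
    calc (a j)^2 ≤ 2 * (Real.sqrt (Real.pi/n) * X) * (Real.sqrt ((n:ℝ)/Real.pi) * Y) := hgn
      _ = 2 * (Real.sqrt (Real.pi/n) * Real.sqrt ((n:ℝ)/Real.pi)) * (X * Y) := by ring
      _ = 2 * (X * Y) := by rw [hprod]; ring
  have hXY0 : 0 ≤ X * Y := mul_nonneg hX0 hY0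
  constructor
  · -- first inequality
    have hR0 : 0 ≤ 2 * X ^ ((1:ℝ)/2) * Y ^ ((1:ℝ)/2) := by
      have := Real.rpow_nonneg hX0 ((1:ℝ)/2)
      have := Real.rpow_nonneg hY0 ((1:ℝ)/2)
      nlinarith []
    rw [linfn]
    apply ciSup_le
    intro j
    have h1 : |a j| = Real.sqrt ((a j)^2) := (Real.sqrt_sq_eq_abs _).symm
    have eX : (X^((1:ℝ)/2))^(2:ℕ) = X := by
      rw [← Real.rpow_natCast (X^((1:ℝ)/2)) 2, ← Real.rpow_mul hX0]
      norm_num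
    have eY : (Y^((1:ℝ)/2))^(2:ℕ) = Y := by
      rw [← Real.rpow_natCast (Y^((1:ℝ)/2)) 2, ← Real.rpow_mul hY0]
      norm_num
    have h2 : (a j)^2 ≤ (2 * X ^ ((1:ℝ)/2) * Y ^ ((1:ℝ)/2))^2 := by
      have e : (2 * X ^ ((1:ℝ)/2) * Y ^ ((1:ℝ)/2))^2
          = 4 * ((X^((1:ℝ)/2))^(2:ℕ) * (Y^((1:ℝ)/2))^(2:ℕ)) := by ring
      rw [e, eX, eY]
      nlinarith [hM j, hXY0]
    calc |a j| = Real.sqrt ((a j)^2) := h1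
      _ ≤ Real.sqrt ((2 * X ^ ((1:ℝ)/2) * Y ^ ((1:ℝ)/2))^2) := Real.sqrt_le_sqrt h2
      _ = 2 * X ^ ((1:ℝ)/2) * Y ^ ((1:ℝ)/2) := Real.sqrt_sq hR0
  · -- second inequality
    have hwsum0 : (0:ℝ) ≤ ∑ j, (((disLap n).mulVec a) j)^2 :=
      Finset.sum_nonneg fun j _ => sq_nonneg _
    have hZ2 : Z^2 = (Real.pi/n) * ∑ j, (((disLap n).mulVec a) j)^2 :=
      Real.sq_sqrt (mul_nonneg hh.le hwsum0)
    have hwsq : ∑ j, ((((-(disLap n))).mulVec a) j)^2 = ∑ j, (((disLap n).mulVec a) j)^2 := by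
      apply Finset.sum_congr rfl
      intro j _
      rw [Matrix.neg_mulVec, Pi.neg_apply]
      ring
    have hCS : X^2 ≤ Z * Y := by
      have hdots : a ⬝ᵥ ((-(disLap n)) *ᵥ a) = ∑ j, a j * (((-(disLap n))).mulVec a) j := rfl
      have h4 : (a ⬝ᵥ ((-(disLap n)) *ᵥ a))^2
          ≤ (∑ j, (a j)^2) * (∑ j, ((((-(disLap n))).mulVec a) j)^2) := by
        rw [hdots]
        exact Finset.sum_mul_sq_le_sq_mul_sq Finset.univ _ _
      have h5 : (X^2)^2 ≤ (Z*Y)^2 := by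
        have e : (X^2)^2 = (Real.pi/n)^2 * (a ⬝ᵥ ((-(disLap n)) *ᵥ a))^2 := by
          rw [hX2dot]; ring
        have e2 : (Z*Y)^2 = (Real.pi/n)^2 * ((∑ j, (a j)^2) * (∑ j, ((((-(disLap n))).mulVec a) j)^2)) := by
          rw [hwsq]
          rw [mul_pow, hZ2, hY2]
          ring
        rw [e, e2]
        exact mul_le_mul_of_nonneg_left h4 (sq_nonneg _)
      have h6 := Real.sqrt_le_sqrt h5
      rwa [Real.sqrt_sq (sq_nonneg X), Real.sqrt_sq (mul_nonneg hZ0 hY0)] at h6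
    have hP6 : ∀ j : Fin (n-1), |a j| ^ (6:ℝ) = ((a j)^2)^(3:ℕ) := by
      intro j
      rw [show (6:ℝ) = ((6:ℕ):ℝ) by norm_num, Real.rpow_natCast,
        show (6:ℕ) = 2*3 by norm_num, pow_mul, sq_abs]
    have hsum6 : ∑ j, |a j| ^ (6:ℝ) ≤ (2*(X*Y))^2 * ∑ j, (a j)^2 := by
      rw [Finset.mul_sum]
      apply Finset.sum_le_sum
      intro j _
      rw [hP6 j]
      have h1 := hM j
      have h2 : (0:ℝ) ≤ (a j)^2 := sq_nonneg _
      have h3 : ((a j)^2)^(2:ℕ) ≤ (2*(X*Y))^2 := pow_le_pow_left₀ h2 h1 2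
      calc ((a j)^2)^(3:ℕ) = ((a j)^2)^(2:ℕ) * (a j)^2 := by ring
        _ ≤ (2*(X*Y))^2 * (a j)^2 := mul_le_mul_of_nonneg_right h3 h2
    have hZY5 : (0:ℝ) ≤ Z * Y^5 := mul_nonneg hZ0 (pow_nonneg hY0 5)
    have hbase : (Real.pi/n) * ∑ j, |a j| ^ (6:ℝ) ≤ 64 * (Z * Y^5) := by
      have c1 : (Real.pi/n) * ∑ j, |a j| ^ (6:ℝ)
          ≤ (Real.pi/n) * ((2*(X*Y))^2 * ∑ j, (a j)^2) :=
        mul_le_mul_of_nonneg_left hsum6 hh.le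
      have c2 : (Real.pi/n) * ((2*(X*Y))^2 * ∑ j, (a j)^2) = 4 * X^2 * Y^2 * Y^2 := by
        have : (Real.pi/n) * ((2*(X*Y))^2 * ∑ j, (a j)^2)
            = (2*(X*Y))^2 * ((Real.pi/n) * ∑ j, (a j)^2) := by ring
        rw [this, ← hY2]
        ring
      have c3 : 4 * X^2 * Y^2 * Y^2 ≤ 4 * (Z*Y) * Y^2 * Y^2 := by
        have h7 : (0:ℝ) ≤ 4 * (Y^2 * Y^2) := mul_nonneg (by norm_num) (mul_nonneg (sq_nonneg Y) (sq_nonneg Y))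
        nlinarith [mul_le_mul_of_nonneg_left hCS h7]
      have c4 : 4 * (Z*Y) * Y^2 * Y^2 ≤ 64 * (Z * Y^5) := by
        nlinarith [hZY5]
      calc (Real.pi/n) * ∑ j, |a j| ^ (6:ℝ) ≤ _ := c1
        _ = _ := c2
        _ ≤ _ := c3
        _ ≤ _ := c4
    have hP0 : (0:ℝ) ≤ (Real.pi/n) * ∑ j, |a j| ^ (6:ℝ) :=
      mul_nonneg hh.le (Finset.sum_nonneg fun j _ => Real.rpow_nonneg (abs_nonneg _) _)
    have hL : lpn n 6 a ≤ (64 * (Z * Y^5))^((1:ℝ)/6) := by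
      rw [lpn]
      exact Real.rpow_le_rpow hP0 hbase (by norm_num)
    have hfinal : (64 * (Z * Y^5))^((1:ℝ)/6) = 2 * Z^((1:ℝ)/6) * Y^((5:ℝ)/6) := by
      rw [Real.mul_rpow (by norm_num : (0:ℝ) ≤ 64) hZY5,
        Real.mul_rpow hZ0 (pow_nonneg hY0 5)]
      have e64 : (64:ℝ)^((1:ℝ)/6) = 2 := by
        rw [show (64:ℝ) = 2^(6:ℕ) by norm_num, ← Real.rpow_natCast 2 6,
          ← Real.rpow_mul (by norm_num : (0:ℝ) ≤ 2)]
        norm_num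
      have eY5 : (Y^(5:ℕ))^((1:ℝ)/6) = Y^((5:ℝ)/6) := by
        rw [← Real.rpow_natCast Y 5, ← Real.rpow_mul hY0]
        norm_num
      rw [e64, eY5]
      ring
    calc lpn n 6 a ≤ (64 * (Z * Y^5))^((1:ℝ)/6) := hL
      _ = 2 * Z^((1:ℝ)/6) * Y^((5:ℝ)/6) := hfinal

/-- There is a constant `C > 0`, independent of `n`, such that for every `n ≥ 2` and every
`a ∈ ℝ^{n-1}`: `‖a‖_{l^∞_n} ≤ C ‖(-A_n)^{1/2} a‖^{1/2}_{l²_n} ‖a‖^{1/2}_{l²_n}` and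
`‖a‖_{l^6_n} ≤ C ‖A_n a‖^{1/6}_{l²_n} ‖a‖^{5/6}_{l²_n}`, where `S = (-A_n)^{1/2}` is the
(unique) symmetric positive definite square root of `-A_n`. -/
theorem stmt2 :
    ∃ C : ℝ, 0 < C ∧ ∀ n : ℕ, 2 ≤ n → ∀ a : Fin (n - 1) → ℝ,
      ∀ S : Matrix (Fin (n - 1)) (Fin (n - 1)) ℝ, S.PosDef → S * S = -(disLap n) →
        linfn n a ≤ C * (l2n n (S.mulVec a)) ^ ((1 : ℝ) / 2) * (l2n n a) ^ ((1 : ℝ) / 2)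
        ∧ lpn n 6 a
            ≤ C * (l2n n ((disLap n).mulVec a)) ^ ((1 : ℝ) / 6) * (l2n n a) ^ ((5 : ℝ) / 6) :=
  ⟨2, by norm_num, fun n hn a S hSpd hSS => stmt2_main n hn a S hSpd hSS⟩
end
end

section
/- For every integer n ≥ 2 the map x ↦ A_n F_n(x) on ℝ^{n-1} is locally weakly monotone and weakly coercive: (i) for every R > 0 there exists K_n(R) > 0 such that for all x, y ∈ ℝ^{n-1} with ‖x‖ ≤ R and ‖y‖ ≤ R, ⟨x - y, A_n F_n(x) - A_n F_n(y)⟩ ≤ K_n(R) ‖x - y‖²; and (ii) there exists K_n > 0 such that ⟨x, A_n F_n(x)⟩ ≤ K_n (1 + ‖x‖²) for all x ∈ ℝ^{n-1}, where ⟨·,·⟩ and ‖·‖ are the standard Euclidean inner product and norm. -/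
noncomputable section

open Real Matrix Finset

/-- The nonlinearity `F_n : ℝ^{n-1} → ℝ^{n-1}`, `F_n(x)_k = x_k³ - x_k`. -/
def Fn (n : ℕ) (x : Fin (n - 1) → ℝ) : Fin (n - 1) → ℝ := fun k => (x k) ^ 3 - x k

section Aux

variable {n : ℕ}

lemma M_pos (hn : 2 ≤ n) : 0 < (n : ℝ) ^ 2 / Real.pi ^ 2 := by
  have h1 : (0:ℝ) < n := by exact_mod_cast (by omega : 0 < n)
  have := Real.pi_pos
  positivity

lemma abs_entry_le (i j : Fin (n-1)) :
    |disLap n i j| ≤ 2 * ((n : ℝ) ^ 2 / Real.pi ^ 2) := by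
  have hM : (0:ℝ) ≤ (n : ℝ) ^ 2 / Real.pi ^ 2 := by positivity
  simp only [disLap, of_apply]
  rw [abs_mul, abs_of_nonneg hM]
  have h : |(if (i : ℕ) = (j : ℕ) then (-2:ℝ)
       else if (i : ℕ) + 1 = (j : ℕ) ∨ (j : ℕ) + 1 = (i : ℕ) then 1 else 0)| ≤ 2 := by
    split_ifs <;> norm_num
  nlinarith [abs_nonneg (if (i : ℕ) = (j : ℕ) then (-2:ℝ)
       else if (i : ℕ) + 1 = (j : ℕ) ∨ (j : ℕ) + 1 = (i : ℕ) then 1 else 0)]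

lemma dot_mulVec (A : Matrix (Fin (n-1)) (Fin (n-1)) ℝ) (u v : Fin (n-1) → ℝ) :
    u ⬝ᵥ A.mulVec v = ∑ i, ∑ j, A i j * (u i * v j) := by
  simp only [dotProduct, Matrix.mulVec, Finset.mul_sum]
  exact Finset.sum_congr rfl fun i _ => Finset.sum_congr rfl fun j _ => by ring

lemma key (u v : Fin (n-1) → ℝ) (C : ℝ) (hC : 0 ≤ C)
    (h : ∀ j, |v j| ≤ C * |u j|) :
    u ⬝ᵥ (disLap n).mulVec v
      ≤ (2 * (n - 1 : ℕ) * ((n : ℝ) ^ 2 / Real.pi ^ 2) * C) * (u ⬝ᵥ u) := by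
  set M : ℝ := (n : ℝ) ^ 2 / Real.pi ^ 2 with hMdef
  have hM : (0:ℝ) ≤ M := by rw [hMdef]; positivity
  rw [dot_mulVec]
  have step : ∀ i j : Fin (n-1),
      disLap n i j * (u i * v j) ≤ M * C * ((u i)^2 + (u j)^2) := by
    intro i j
    have h1 : disLap n i j * (u i * v j) ≤ |disLap n i j| * (|u i| * |v j|) := by
      calc disLap n i j * (u i * v j) ≤ |disLap n i j * (u i * v j)| := le_abs_self _
        _ = |disLap n i j| * (|u i| * |v j|) := by rw [abs_mul, abs_mul]
    have h2 := abs_entry_le i j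
    have h3 := h j
    have h4 : |u i| * |u j| ≤ ((u i)^2 + (u j)^2) / 2 := by
      nlinarith [sq_nonneg (|u i| - |u j|), sq_abs (u i), sq_abs (u j)]
    nlinarith [abs_nonneg (u i), abs_nonneg (u j), abs_nonneg (v j),
      abs_nonneg (disLap n i j),
      mul_le_mul_of_nonneg_left h3 (abs_nonneg (u i)),
      mul_le_mul_of_nonneg_right h2 (mul_nonneg (abs_nonneg (u i)) (abs_nonneg (v j))),
      mul_le_mul_of_nonneg_left h4 (mul_nonneg (mul_nonneg (by norm_num : (0:ℝ) ≤ 2) hM) hC)]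
  calc ∑ i, ∑ j, disLap n i j * (u i * v j)
      ≤ ∑ i, ∑ j, M * C * ((u i)^2 + (u j)^2) :=
        Finset.sum_le_sum fun i _ => Finset.sum_le_sum fun j _ => step i j
    _ = (2 * (n - 1 : ℕ) * M * C) * (u ⬝ᵥ u) := by
        simp only [dotProduct, Finset.mul_sum, Finset.sum_add_distrib, Finset.sum_const,
          Finset.card_univ, Fintype.card_fin, nsmul_eq_mul, ← Finset.sum_mul, ← Finset.mul_sum]
        have : ∀ i : Fin (n-1), u i * u i = (u i)^2 := fun i => by ring
        rw [Finset.sum_congr rfl fun i _ => this i]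
        ring

lemma disLap_symm (i j : Fin (n-1)) : disLap n i j = disLap n j i := by
  simp only [disLap, of_apply]
  congr 1
  rcases eq_or_ne (i : ℕ) (j : ℕ) with h | h
  · rw [if_pos h, if_pos h.symm]
  · rw [if_neg h, if_neg (Ne.symm h)]
    exact if_congr or_comm rfl rfl

lemma sum_ite_le {m : ℕ} (p : Fin m → Prop) [DecidablePred p]
    (h : ∀ a b, p a → p b → a = b) {c : ℝ} (hc : 0 ≤ c) :
    ∑ j, (if p j then c else 0) ≤ c := by
  rw [Finset.sum_ite, Finset.sum_const, Finset.sum_const, smul_zero, add_zero, nsmul_eq_mul]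
  have hcard : (Finset.univ.filter p).card ≤ 1 :=
    Finset.card_le_one.mpr fun a ha b hb =>
      h a b (Finset.mem_filter.mp ha).2 (Finset.mem_filter.mp hb).2
  have : ((Finset.univ.filter p).card : ℝ) ≤ 1 := by exact_mod_cast hcard
  nlinarith

lemma cubic (hn : 2 ≤ n) (x : Fin (n-1) → ℝ) :
    x ⬝ᵥ (disLap n).mulVec (fun k => (x k)^3) ≤ 0 := by
  set M : ℝ := (n : ℝ) ^ 2 / Real.pi ^ 2 with hMdef
  have hM : (0:ℝ) ≤ M := by rw [hMdef]; positivity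
  rw [dot_mulVec]
  set S : ℝ := ∑ i, ∑ j, disLap n i j * (x i * (x j)^3) with hS
  have hswap : S = ∑ i, ∑ j, disLap n i j * (x j * (x i)^3) := by
    rw [hS, Finset.sum_comm]
    exact Finset.sum_congr rfl fun j _ => Finset.sum_congr rfl fun i _ => by
      rw [disLap_symm]
  have h2S : 2 * S = ∑ i, ∑ j, disLap n i j * (x i * (x j)^3 + x j * (x i)^3) := by
    rw [two_mul]
    nth_rewrite 2 [hswap]
    rw [hS, ← Finset.sum_add_distrib]
    exact Finset.sum_congr rfl fun i _ => by
      rw [← Finset.sum_add_distrib]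
      exact Finset.sum_congr rfl fun j _ => by ring
  -- termwise bound
  have step : ∀ i j : Fin (n-1),
      disLap n i j * (x i * (x j)^3 + x j * (x i)^3)
        ≤ (if (i:ℕ) = (j:ℕ) then -4 * M * (x i)^4 else 0)
          + (if (i:ℕ) + 1 = (j:ℕ) ∨ (j:ℕ) + 1 = (i:ℕ) then M * (x i)^4 else 0)
          + (if (i:ℕ) + 1 = (j:ℕ) ∨ (j:ℕ) + 1 = (i:ℕ) then M * (x j)^4 else 0) := by
    intro i j
    rcases eq_or_ne (i : ℕ) (j : ℕ) with h | h
    · have hij : i = j := Fin.ext h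
      subst hij
      have hne : ¬((i:ℕ) + 1 = (i:ℕ) ∨ (i:ℕ) + 1 = (i:ℕ)) := by omega
      have hA : disLap n i i = M * (-2) := by
        simp [disLap, hMdef]
      simp only [if_pos rfl, if_neg hne, hA, if_true]
      nlinarith [sq_nonneg ((x i)^2)]
    · rw [if_neg h]
      by_cases hadj : (i:ℕ) + 1 = (j:ℕ) ∨ (j:ℕ) + 1 = (i:ℕ)
      · have hA : disLap n i j = M * 1 := by
          simp only [disLap, of_apply, ← hMdef]
          rw [if_neg h, if_pos hadj]
        rw [if_pos hadj, if_pos hadj, hA]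
        have hq : x i * (x j)^3 + x j * (x i)^3 ≤ (x i)^4 + (x j)^4 := by
          nlinarith [mul_nonneg (sq_nonneg (x i - x j)) (sq_nonneg (x i + x j)),
            mul_nonneg (sq_nonneg (x i - x j)) (sq_nonneg (x i)),
            mul_nonneg (sq_nonneg (x i - x j)) (sq_nonneg (x j))]
        nlinarith [mul_le_mul_of_nonneg_left hq hM]
      · have hA : disLap n i j = M * 0 := by
          simp only [disLap, of_apply, ← hMdef]
          rw [if_neg h, if_neg hadj]
        rw [if_neg hadj, if_neg hadj, hA]
        simp
  have hdiag : ∀ i : Fin (n-1),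
      (∑ j : Fin (n-1), if (i:ℕ) = (j:ℕ) then -4 * M * (x i)^4 else 0) = -4 * M * (x i)^4 := by
    intro i
    simp only [Fin.val_eq_val]
    rw [Finset.sum_ite_eq]
    simp
  have hadj1 : ∀ i : Fin (n-1),
      (∑ j : Fin (n-1), if (i:ℕ) + 1 = (j:ℕ) ∨ (j:ℕ) + 1 = (i:ℕ) then M * (x i)^4 else 0)
        ≤ 2 * (M * (x i)^4) := by
    intro i
    have hc : (0:ℝ) ≤ M * (x i)^4 := mul_nonneg hM (by positivity)
    have split : ∀ j : Fin (n-1),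
        (if (i:ℕ) + 1 = (j:ℕ) ∨ (j:ℕ) + 1 = (i:ℕ) then M * (x i)^4 else 0)
          ≤ (if (i:ℕ) + 1 = (j:ℕ) then M * (x i)^4 else 0)
            + (if (j:ℕ) + 1 = (i:ℕ) then M * (x i)^4 else 0) := by
      intro j
      split_ifs <;> first | linarith | tauto
    calc (∑ j : Fin (n-1), if (i:ℕ) + 1 = (j:ℕ) ∨ (j:ℕ) + 1 = (i:ℕ) then M * (x i)^4 else 0)
        ≤ ∑ j : Fin (n-1), ((if (i:ℕ) + 1 = (j:ℕ) then M * (x i)^4 else 0)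
            + (if (j:ℕ) + 1 = (i:ℕ) then M * (x i)^4 else 0)) :=
          Finset.sum_le_sum fun j _ => split j
      _ = (∑ j : Fin (n-1), if (i:ℕ) + 1 = (j:ℕ) then M * (x i)^4 else 0)
          + (∑ j : Fin (n-1), if (j:ℕ) + 1 = (i:ℕ) then M * (x i)^4 else 0) := Finset.sum_add_distrib
      _ ≤ M * (x i)^4 + M * (x i)^4 := by
          gcongr
          · exact sum_ite_le _ (fun a b ha hb => Fin.ext (by omega)) hc
          · exact sum_ite_le _ (fun a b ha hb => Fin.ext (by omega)) hc
      _ = 2 * (M * (x i)^4) := by ring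
  have hadj2 :
      (∑ i : Fin (n-1), ∑ j : Fin (n-1), if (i:ℕ) + 1 = (j:ℕ) ∨ (j:ℕ) + 1 = (i:ℕ) then M * ((x j))^4 else 0)
        = ∑ i : Fin (n-1), ∑ j : Fin (n-1), if (i:ℕ) + 1 = (j:ℕ) ∨ (j:ℕ) + 1 = (i:ℕ) then M * ((x i))^4 else 0 := by
    rw [Finset.sum_comm]
    exact Finset.sum_congr rfl fun j _ => Finset.sum_congr rfl fun i _ =>
      if_congr or_comm rfl rfl
  have hbound : 2 * S ≤ 0 := by
    rw [h2S]
    calc (∑ i, ∑ j, disLap n i j * (x i * (x j)^3 + x j * (x i)^3))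
        ≤ ∑ i : Fin (n-1), ∑ j : Fin (n-1), ((if (i:ℕ) = (j:ℕ) then -4 * M * (x i)^4 else 0)
          + (if (i:ℕ) + 1 = (j:ℕ) ∨ (j:ℕ) + 1 = (i:ℕ) then M * (x i)^4 else 0)
          + (if (i:ℕ) + 1 = (j:ℕ) ∨ (j:ℕ) + 1 = (i:ℕ) then M * (x j)^4 else 0)) :=
          Finset.sum_le_sum fun i _ => Finset.sum_le_sum fun j _ => step i j
      _ = (∑ i : Fin (n-1), ∑ j : Fin (n-1), (if (i:ℕ) = (j:ℕ) then -4 * M * (x i)^4 else 0))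
          + (∑ i : Fin (n-1), ∑ j : Fin (n-1), (if (i:ℕ) + 1 = (j:ℕ) ∨ (j:ℕ) + 1 = (i:ℕ) then M * (x i)^4 else 0))
          + (∑ i : Fin (n-1), ∑ j : Fin (n-1), (if (i:ℕ) + 1 = (j:ℕ) ∨ (j:ℕ) + 1 = (i:ℕ) then M * (x j)^4 else 0)) := by
          simp [Finset.sum_add_distrib]
      _ = (∑ i : Fin (n-1), -4 * M * (x i)^4)
          + (∑ i : Fin (n-1), ∑ j : Fin (n-1), (if (i:ℕ) + 1 = (j:ℕ) ∨ (j:ℕ) + 1 = (i:ℕ) then M * (x i)^4 else 0))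
          + (∑ i : Fin (n-1), ∑ j : Fin (n-1), (if (i:ℕ) + 1 = (j:ℕ) ∨ (j:ℕ) + 1 = (i:ℕ) then M * (x i)^4 else 0)) := by
          rw [hadj2, Finset.sum_congr rfl fun i _ => hdiag i]
      _ ≤ (∑ i : Fin (n-1), -4 * M * (x i)^4) + (∑ i : Fin (n-1), 2 * (M * (x i)^4)) + (∑ i : Fin (n-1), 2 * (M * (x i)^4)) := by
          gcongr <;> exact hadj1 _
      _ = 0 := by
          rw [← Finset.sum_add_distrib, ← Finset.sum_add_distrib]
          rw [Finset.sum_congr rfl fun i (_ : i ∈ Finset.univ) => (by ring :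
            -4 * M * (x i)^4 + 2 * (M * (x i)^4) + 2 * (M * (x i)^4) = 0)]
          simp
  linarith

end Aux

/-- For every `n ≥ 2`, the map `x ↦ A_n F_n(x)` is locally weakly monotone and weakly coercive:
(i) for every `R > 0` there is `K_n(R) > 0` with
`⟨x - y, A_n F_n(x) - A_n F_n(y)⟩ ≤ K_n(R) ‖x - y‖²` whenever `‖x‖, ‖y‖ ≤ R`;
(ii) there is `K_n > 0` with `⟨x, A_n F_n(x)⟩ ≤ K_n (1 + ‖x‖²)` for all `x`.
Here `⟨·,·⟩` is the Euclidean inner product and `‖x‖ = √(x ⬝ᵥ x)` the Euclidean norm. -/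
theorem stmt6 (n : ℕ) (hn : 2 ≤ n) :
    (∀ R : ℝ, 0 < R → ∃ K : ℝ, 0 < K ∧ ∀ x y : Fin (n - 1) → ℝ,
        Real.sqrt (x ⬝ᵥ x) ≤ R → Real.sqrt (y ⬝ᵥ y) ≤ R →
          (x - y) ⬝ᵥ ((disLap n).mulVec (Fn n x) - (disLap n).mulVec (Fn n y))
            ≤ K * ((x - y) ⬝ᵥ (x - y)))
    ∧ (∃ K : ℝ, 0 < K ∧ ∀ x : Fin (n - 1) → ℝ,
        x ⬝ᵥ (disLap n).mulVec (Fn n x) ≤ K * (1 + x ⬝ᵥ x)) := by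
  have hM : (0:ℝ) < (n : ℝ) ^ 2 / Real.pi ^ 2 := M_pos hn
  have hm : (1:ℝ) ≤ (n - 1 : ℕ) := by
    have : 1 ≤ n - 1 := by omega
    exact_mod_cast this
  have comp_bound : ∀ (x : Fin (n-1) → ℝ) (R : ℝ), Real.sqrt (x ⬝ᵥ x) ≤ R →
      ∀ k, |x k| ≤ R := by
    intro x R hR k
    have h1 : (x k)^2 ≤ x ⬝ᵥ x := by
      have : (x k) * (x k) ≤ ∑ j, x j * x j :=
        Finset.single_le_sum (fun j _ => mul_self_nonneg (x j)) (Finset.mem_univ k)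
      simpa [dotProduct, sq] using this
    calc |x k| = Real.sqrt ((x k)^2) := (Real.sqrt_sq_eq_abs _).symm
      _ ≤ Real.sqrt (x ⬝ᵥ x) := Real.sqrt_le_sqrt h1
      _ ≤ R := hR
  constructor
  · intro R hR
    refine ⟨2 * (n - 1 : ℕ) * ((n : ℝ) ^ 2 / Real.pi ^ 2) * (3 * R^2 + 1), by positivity,
      fun x y hx hy => ?_⟩
    rw [← Matrix.mulVec_sub]
    have hC : (0:ℝ) ≤ 3 * R^2 + 1 := by positivity
    apply key _ _ _ hC
    intro j
    have hxj := comp_bound x R hx j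
    have hyj := comp_bound y R hy j
    have hid : Fn n x j - Fn n y j
        = (x j - y j) * ((x j)^2 + x j * y j + (y j)^2 - 1) := by
      simp only [Fn]; ring
    have habs : |Fn n x j - Fn n y j|
        = |x j - y j| * |(x j)^2 + x j * y j + (y j)^2 - 1| := by
      rw [hid, abs_mul]
    have hquad : |(x j)^2 + x j * y j + (y j)^2 - 1| ≤ 3 * R^2 + 1 := by
      obtain ⟨ha1, ha2⟩ := abs_le.mp hxj
      obtain ⟨hb1, hb2⟩ := abs_le.mp hyj
      rw [abs_le]
      constructor <;> nlinarith [sq_nonneg (x j + y j), sq_nonneg (x j - y j), sq_nonneg R]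
    have : (Fn n x - Fn n y) j = Fn n x j - Fn n y j := rfl
    rw [this, habs]
    have hsub : (x - y) j = x j - y j := rfl
    rw [hsub]
    exact mul_le_mul_of_nonneg_left hquad (abs_nonneg _) |>.trans_eq (mul_comm _ _)
  · refine ⟨2 * (n - 1 : ℕ) * ((n : ℝ) ^ 2 / Real.pi ^ 2), by positivity, fun x => ?_⟩
    have hsplit : Fn n x = (fun k => (x k)^3) - x := by
      funext k; simp [Fn]
    rw [hsplit, Matrix.mulVec_sub, dotProduct_sub]
    have h1 := cubic hn x
    have h2 : x ⬝ᵥ (disLap n).mulVec (-x)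
        ≤ (2 * (n - 1 : ℕ) * ((n : ℝ) ^ 2 / Real.pi ^ 2) * 1) * (x ⬝ᵥ x) :=
      key x (-x) 1 zero_le_one (fun j => by simp)
    have h3 : x ⬝ᵥ (disLap n).mulVec (-x) = -(x ⬝ᵥ (disLap n).mulVec x) := by
      rw [Matrix.mulVec_neg, dotProduct_neg]
    have hxx : (0:ℝ) ≤ x ⬝ᵥ x := by
      simp only [dotProduct]
      exact Finset.sum_nonneg fun i _ => mul_self_nonneg _
    nlinarith
end
end

section
/- For every integer n ≥ 2 and all x, y ∈ ℝ^{n-1}: ⟨x - y, -(-A_n)^{1/2} F_n((-A_n)^{1/2} x) + (-A_n)^{1/2} F_n((-A_n)^{1/2} y)⟩ ≤ (n-1)² ‖x - y‖², where ⟨·,·⟩ and ‖·‖ are the standard Euclidean inner product and norm; that is, the transformed drift x ↦ -(-A_n)^{1/2} F_n((-A_n)^{1/2} x) satisfies a one-sided Lipschitz condition with constant (n-1)². -/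
noncomputable section

open Real Matrix Finset

/-- For every `n ≥ 2` and all `x, y ∈ ℝ^{n-1}`, with `S = (-A_n)^{1/2}` the (unique)
symmetric positive definite square root of `-A_n`:
`⟨x - y, -S F_n(S x) + S F_n(S y)⟩ ≤ (n-1)² ‖x - y‖²`, i.e. the transformed drift
`x ↦ -(-A_n)^{1/2} F_n((-A_n)^{1/2} x)` is one-sided Lipschitz with constant `(n-1)²`. -/
theorem stmt7 (n : ℕ) (hn : 2 ≤ n)
    (S : Matrix (Fin (n - 1)) (Fin (n - 1)) ℝ) (hS : S.PosDef)
    (hSS : S * S = -(disLap n)) (x y : Fin (n - 1) → ℝ) :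
    (x - y) ⬝ᵥ (-(S.mulVec (Fn n (S.mulVec x))) + S.mulVec (Fn n (S.mulVec y)))
      ≤ ((n : ℝ) - 1) ^ 2 * ((x - y) ⬝ᵥ (x - y)) := by
  have hπ : (3:ℝ) < Real.pi := Real.pi_gt_three
  set B := -(disLap n) with hBdef
  set c : ℝ := (n : ℝ) ^ 2 / Real.pi ^ 2 with hcdef
  have hc : 0 ≤ c := by positivity
  set z := x - y with hz
  have hsym : Sᵀ = S := by
    ext i j
    simpa [Matrix.conjTranspose_apply] using congrFun (congrFun hS.1.eq i) j
  -- Step A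
  have hA : z ⬝ᵥ (-(S.mulVec (Fn n (S.mulVec x))) + S.mulVec (Fn n (S.mulVec y)))
      = (S.mulVec z) ⬝ᵥ (Fn n (S.mulVec y) - Fn n (S.mulVec x)) := by
    rw [show -(S.mulVec (Fn n (S.mulVec x))) + S.mulVec (Fn n (S.mulVec y))
        = S.mulVec (Fn n (S.mulVec y) - Fn n (S.mulVec x)) by
      rw [Matrix.mulVec_sub]; abel]
    rw [Matrix.dotProduct_mulVec, ← Matrix.mulVec_transpose, hsym]
  -- Step B
  have hB2 : (S.mulVec z) ⬝ᵥ (Fn n (S.mulVec y) - Fn n (S.mulVec x))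
      ≤ (S.mulVec z) ⬝ᵥ (S.mulVec z) := by
    have hw : S.mulVec z = S.mulVec x - S.mulVec y := by rw [hz, Matrix.mulVec_sub]
    simp only [dotProduct]
    apply Finset.sum_le_sum
    intro k _
    have hwk : S.mulVec z k = S.mulVec x k - S.mulVec y k := by rw [hw]; rfl
    simp only [Fn, Pi.sub_apply, hwk]
    nlinarith [sq_nonneg (S.mulVec x k - S.mulVec y k), sq_nonneg (S.mulVec x k + S.mulVec y k),
      sq_nonneg (S.mulVec x k), sq_nonneg (S.mulVec y k)]
  -- Step C
  have hC : (S.mulVec z) ⬝ᵥ (S.mulVec z) = z ⬝ᵥ (B *ᵥ z) := by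
    rw [← hSS, ← Matrix.mulVec_mulVec, Matrix.dotProduct_mulVec, ← Matrix.mulVec_transpose, hsym]
    exact dotProduct_comm _ _
  -- pointwise bound on |B i j|
  have habs : ∀ i j : Fin (n-1), |B i j| ≤ c *
      ((if (i:ℕ) = (j:ℕ) then 2 else 0) + (if (i:ℕ)+1 = (j:ℕ) then 1 else 0)
        + (if (j:ℕ)+1 = (i:ℕ) then 1 else 0)) := by
    intro i j
    have hbij : B i j = -(c * (if (i : ℕ) = (j : ℕ) then -2
       else if (i : ℕ) + 1 = (j : ℕ) ∨ (j : ℕ) + 1 = (i : ℕ) then 1 else 0)) := rfl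
    rw [hbij, abs_neg, abs_mul, abs_of_nonneg hc]
    apply mul_le_mul_of_nonneg_left _ hc
    split_ifs <;> norm_num <;> tauto
  -- symmetry of B
  have hBsymm : ∀ i j, B i j = B j i := by
    intro i j
    show -(disLap n) i j = -(disLap n) j i
    simp only [Matrix.neg_apply, disLap, Matrix.of_apply, neg_inj]
    by_cases h1 : (i:ℕ) = (j:ℕ)
    · simp [h1]
    · have h1' : ¬ (j:ℕ) = (i:ℕ) := fun h => h1 h.symm
      by_cases h2 : (i:ℕ)+1 = (j:ℕ)
      · simp [h1, h1', h2]
      · by_cases h3 : (j:ℕ)+1 = (i:ℕ) <;> simp [h1, h1', h2, h3]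
  -- diagonal sum
  have hdiag : ∀ i : Fin (n-1), (∑ j : Fin (n-1), if (i:ℕ) = (j:ℕ) then (2:ℝ) else 0) = 2 := by
    intro i
    simp only [Fin.val_eq_val]
    rw [Finset.sum_ite_eq]
    simp
  -- row sums
  have hrow : ∀ i : Fin (n-1), (∑ j : Fin (n-1), |B i j|) ≤ ((n:ℝ)-1)^2 := by
    intro i
    have h1 : (∑ j : Fin (n-1), |B i j|) ≤ c *
        (2 + (∑ j : Fin (n-1), if (i:ℕ)+1 = (j:ℕ) then (1:ℝ) else 0)
        + (∑ j : Fin (n-1), if (j:ℕ)+1 = (i:ℕ) then (1:ℝ) else 0)) := by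
      calc (∑ j : Fin (n-1), |B i j|)
          ≤ ∑ j : Fin (n-1), c * ((if (i:ℕ) = (j:ℕ) then 2 else 0)
            + (if (i:ℕ)+1 = (j:ℕ) then 1 else 0) + (if (j:ℕ)+1 = (i:ℕ) then 1 else 0)) :=
          Finset.sum_le_sum fun j _ => habs i j
        _ = c * (2 + (∑ j : Fin (n-1), if (i:ℕ)+1 = (j:ℕ) then (1:ℝ) else 0)
            + (∑ j : Fin (n-1), if (j:ℕ)+1 = (i:ℕ) then (1:ℝ) else 0)) := by
          rw [← Finset.mul_sum]
          congr 1
          rw [Finset.sum_add_distrib, Finset.sum_add_distrib, hdiag i]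
    rcases eq_or_lt_of_le hn with hn2 | hn3
    · -- n = 2
      have hs1 : (∑ j : Fin (n-1), if (i:ℕ)+1 = (j:ℕ) then (1:ℝ) else 0) = 0 := by
        apply Finset.sum_eq_zero
        intro j _
        have hj : (j:ℕ) < n - 1 := j.isLt
        rw [if_neg (by omega)]
      have hs2 : (∑ j : Fin (n-1), if (j:ℕ)+1 = (i:ℕ) then (1:ℝ) else 0) = 0 := by
        apply Finset.sum_eq_zero
        intro j _
        have hi : (i:ℕ) < n - 1 := i.isLt
        rw [if_neg (by omega)]
      rw [hs1, hs2] at h1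
      have hnr : (n:ℝ) = 2 := by rw [← hn2]; norm_num
      refine h1.trans ?_
      rw [hcdef, hnr]
      rw [div_mul_eq_mul_div, div_le_iff₀ (by positivity)]
      nlinarith [hπ]
    · -- n ≥ 3
      have hs1 : (∑ j : Fin (n-1), if (i:ℕ)+1 = (j:ℕ) then (1:ℝ) else 0) ≤ 1 := by
        rw [Finset.sum_boole]
        have hcard : (Finset.univ.filter fun j : Fin (n-1) => (i:ℕ)+1 = (j:ℕ)).card ≤ 1 := by
          apply Finset.card_le_one.mpr
          intro a ha b hb
          simp only [Finset.mem_filter, Finset.mem_univ, true_and] at ha hb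
          exact Fin.val_injective (by omega)
        exact_mod_cast hcard
      have hs2 : (∑ j : Fin (n-1), if (j:ℕ)+1 = (i:ℕ) then (1:ℝ) else 0) ≤ 1 := by
        rw [Finset.sum_boole]
        have hcard : (Finset.univ.filter fun j : Fin (n-1) => (j:ℕ)+1 = (i:ℕ)).card ≤ 1 := by
          apply Finset.card_le_one.mpr
          intro a ha b hb
          simp only [Finset.mem_filter, Finset.mem_univ, true_and] at ha hb
          exact Fin.val_injective (by omega)
        exact_mod_cast hcard
      have h2 : (∑ j : Fin (n-1), |B i j|) ≤ c * 4 := by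
        refine h1.trans ?_
        apply mul_le_mul_of_nonneg_left _ hc
        linarith
      refine h2.trans ?_
      have hnr : (3:ℝ) ≤ (n:ℝ) := by exact_mod_cast hn3
      rw [hcdef, div_mul_eq_mul_div, div_le_iff₀ (by positivity)]
      have h9 : (9:ℝ) ≤ Real.pi^2 := by nlinarith
      nlinarith [mul_nonneg (by linarith : (0:ℝ) ≤ (n:ℝ) - 3) (by linarith : (0:ℝ) ≤ 5*(n:ℝ) - 3),
        mul_nonneg (sq_nonneg ((n:ℝ) - 1)) (by linarith : (0:ℝ) ≤ Real.pi^2 - 9)]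
  have hcol : ∀ j : Fin (n-1), (∑ i : Fin (n-1), |B i j|) ≤ ((n:ℝ)-1)^2 := by
    intro j
    have heq : (∑ i : Fin (n-1), |B i j|) = ∑ i : Fin (n-1), |B j i| := by
      apply Finset.sum_congr rfl
      intro i _
      rw [hBsymm i j]
    rw [heq]
    exact hrow j
  -- Step D
  have hD : z ⬝ᵥ (B *ᵥ z) ≤ ((n:ℝ)-1)^2 * (z ⬝ᵥ z) := by
    have expand : z ⬝ᵥ (B *ᵥ z) = ∑ i : Fin (n-1), ∑ j : Fin (n-1), z i * (B i j * z j) := by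
      simp [dotProduct, Matrix.mulVec, Finset.mul_sum]
    rw [expand]
    have step1 : ∀ i j, z i * (B i j * z j) ≤ |B i j| * (z i^2/2) + |B i j| * (z j^2/2) := by
      intro i j
      nlinarith [le_abs_self (B i j), neg_abs_le (B i j), sq_nonneg (z i + z j),
        sq_nonneg (z i - z j), abs_nonneg (B i j)]
    calc (∑ i : Fin (n-1), ∑ j : Fin (n-1), z i * (B i j * z j))
        ≤ ∑ i : Fin (n-1), ∑ j : Fin (n-1), (|B i j| * (z i^2/2) + |B i j| * (z j^2/2)) :=
          Finset.sum_le_sum fun i _ => Finset.sum_le_sum fun j _ => step1 i j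
      _ = (∑ i : Fin (n-1), ∑ j : Fin (n-1), |B i j| * (z i^2/2))
            + (∑ i : Fin (n-1), ∑ j : Fin (n-1), |B i j| * (z j^2/2)) := by
          rw [← Finset.sum_add_distrib]
          exact Finset.sum_congr rfl fun i _ => Finset.sum_add_distrib
      _ ≤ (∑ i : Fin (n-1), ((n:ℝ)-1)^2 * (z i^2/2))
            + (∑ j : Fin (n-1), ((n:ℝ)-1)^2 * (z j^2/2)) := by
          apply add_le_add
          · apply Finset.sum_le_sum
            intro i _
            rw [← Finset.sum_mul]
            exact mul_le_mul_of_nonneg_right (hrow i) (by positivity)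
          · rw [Finset.sum_comm]
            apply Finset.sum_le_sum
            intro j _
            rw [← Finset.sum_mul]
            exact mul_le_mul_of_nonneg_right (hcol j) (by positivity)
      _ = ((n:ℝ)-1)^2 * (z ⬝ᵥ z) := by
          simp only [dotProduct, Finset.mul_sum]
          rw [← Finset.sum_add_distrib]
          apply Finset.sum_congr rfl
          intro i _
          ring
  calc (x - y) ⬝ᵥ (-(S.mulVec (Fn n (S.mulVec x))) + S.mulVec (Fn n (S.mulVec y)))
      = (S.mulVec z) ⬝ᵥ (Fn n (S.mulVec y) - Fn n (S.mulVec x)) := hA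
    _ ≤ (S.mulVec z) ⬝ᵥ (S.mulVec z) := hB2
    _ = z ⬝ᵥ (B *ᵥ z) := hC
    _ ≤ ((n:ℝ)-1)^2 * (z ⬝ᵥ z) := hD
end
end

section
/- There exists a constant C > 0, independent of n, such that for every integer n ≥ 2 and all a, b ∈ ℝ^{n-1}: ‖(-A_n)^{1/2}(F_n(a) - F_n(b))‖_{l²_n} ≤ C (1 + ‖(-A_n)^{1/2} a‖²_{l²_n} + ‖(-A_n)^{1/2} b‖²_{l²_n}) · ‖(-A_n)^{1/2}(a - b)‖_{l²_n}. -/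
noncomputable section

open Real Matrix Finset

namespace Stmt9A

variable {m : ℕ}

def ex (m : ℕ) (x : Fin m → ℝ) (k : ℕ) : ℝ :=
  if h : 1 ≤ k ∧ k ≤ m then x ⟨k - 1, by omega⟩ else 0

def DD (m : ℕ) (x : Fin m → ℝ) (k : ℕ) : ℝ := ex m x (k + 1) - ex m x k

def QQ (m : ℕ) (x : Fin m → ℝ) : ℝ := ∑ k ∈ Finset.range (m + 1), (DD m x k) ^ 2

lemma DD_def (x : Fin m → ℝ) (k : ℕ) : DD m x k = ex m x (k + 1) - ex m x k := rfl

lemma ex_zero (x : Fin m → ℝ) : ex m x 0 = 0 := by simp [ex]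

lemma ex_big (x : Fin m → ℝ) {k : ℕ} (hk : m < k) : ex m x k = 0 := by
  unfold ex; rw [dif_neg]; omega

lemma ex_val (x : Fin m → ℝ) (i : Fin m) : ex m x ((i : ℕ) + 1) = x i := by
  unfold ex
  rw [dif_pos ⟨by omega, by omega⟩]
  congr 1

lemma ex_mul (x y : Fin m → ℝ) (k : ℕ) : ex m (x * y) k = ex m x k * ex m y k := by
  unfold ex; split_ifs with h
  · rfl
  · ring

lemma DD_mul (x y : Fin m → ℝ) (k : ℕ) :
    DD m (x * y) k = ex m x (k + 1) * DD m y k + DD m x k * ex m y k := by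
  simp only [DD, ex_mul]; ring

lemma QQ_nonneg (x : Fin m → ℝ) : 0 ≤ QQ m x :=
  Finset.sum_nonneg fun _ _ => sq_nonneg _

lemma ex_sq_le (x : Fin m → ℝ) (k : ℕ) : (ex m x k) ^ 2 ≤ (m + 1 : ℝ) * QQ m x := by
  rcases le_or_gt k (m + 1) with hk | hk
  · have htel : ex m x k = ∑ j ∈ Finset.range k, DD m x j := by
      simp only [DD_def]
      rw [Finset.sum_range_sub (f := ex m x), ex_zero, sub_zero]
    have h1 : (ex m x k) ^ 2 ≤ (k : ℝ) * ∑ j ∈ Finset.range k, (DD m x j) ^ 2 := by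
      rw [htel]
      simpa using sq_sum_le_card_mul_sum_sq (s := Finset.range k) (f := DD m x)
    have h2 : ∑ j ∈ Finset.range k, (DD m x j) ^ 2 ≤ QQ m x := by
      apply Finset.sum_le_sum_of_subset_of_nonneg
      · exact Finset.range_subset_range.2 hk
      · intro _ _ _; positivity
    calc (ex m x k) ^ 2 ≤ (k : ℝ) * ∑ j ∈ Finset.range k, (DD m x j) ^ 2 := h1
      _ ≤ (m + 1 : ℝ) * QQ m x := by
          apply mul_le_mul (by exact_mod_cast hk) h2 (Finset.sum_nonneg fun _ _ => sq_nonneg _)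
            (by positivity)
  · rw [ex_big x (by omega)]
    nlinarith [QQ_nonneg x]


lemma mink (s : Finset ℕ) (f g : ℕ → ℝ) :
    Real.sqrt (∑ k ∈ s, (f k + g k) ^ 2) ≤
      Real.sqrt (∑ k ∈ s, (f k) ^ 2) + Real.sqrt (∑ k ∈ s, (g k) ^ 2) := by
  have hf : (0:ℝ) ≤ ∑ k ∈ s, (f k) ^ 2 := Finset.sum_nonneg fun _ _ => sq_nonneg _
  have hg : (0:ℝ) ≤ ∑ k ∈ s, (g k) ^ 2 := Finset.sum_nonneg fun _ _ => sq_nonneg _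
  have hcs := Real.sum_mul_le_sqrt_mul_sqrt s f g
  have e1 : Real.sqrt (∑ k ∈ s, (f k) ^ 2) ^ 2 = ∑ k ∈ s, (f k) ^ 2 := Real.sq_sqrt hf
  have e2 : Real.sqrt (∑ k ∈ s, (g k) ^ 2) ^ 2 = ∑ k ∈ s, (g k) ^ 2 := Real.sq_sqrt hg
  have hexp : ∑ k ∈ s, (f k + g k) ^ 2
      = ∑ k ∈ s, (f k) ^ 2 + 2 * ∑ k ∈ s, f k * g k + ∑ k ∈ s, (g k) ^ 2 := by
    rw [Finset.mul_sum, ← Finset.sum_add_distrib, ← Finset.sum_add_distrib]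
    apply Finset.sum_congr rfl; intro k _; ring
  have hle : ∑ k ∈ s, (f k + g k) ^ 2
      ≤ (Real.sqrt (∑ k ∈ s, (f k) ^ 2) + Real.sqrt (∑ k ∈ s, (g k) ^ 2)) ^ 2 := by
    rw [hexp]
    nlinarith [hcs, Real.sqrt_nonneg (∑ k ∈ s, (f k) ^ 2), Real.sqrt_nonneg (∑ k ∈ s, (g k) ^ 2)]
  calc Real.sqrt (∑ k ∈ s, (f k + g k) ^ 2)
      ≤ Real.sqrt ((Real.sqrt (∑ k ∈ s, (f k) ^ 2) + Real.sqrt (∑ k ∈ s, (g k) ^ 2)) ^ 2) :=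
        Real.sqrt_le_sqrt hle
    _ = _ := Real.sqrt_sq (by positivity)

lemma weighted (s : Finset ℕ) (c f : ℕ → ℝ) (C : ℝ) (hC : 0 ≤ C)
    (h : ∀ k ∈ s, (c k) ^ 2 ≤ C ^ 2) :
    Real.sqrt (∑ k ∈ s, (c k * f k) ^ 2) ≤ C * Real.sqrt (∑ k ∈ s, (f k) ^ 2) := by
  have h1 : ∑ k ∈ s, (c k * f k) ^ 2 ≤ C ^ 2 * ∑ k ∈ s, (f k) ^ 2 := by
    rw [Finset.mul_sum]
    apply Finset.sum_le_sum
    intro k hk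
    have := h k hk
    nlinarith [sq_nonneg (f k)]
  calc Real.sqrt (∑ k ∈ s, (c k * f k) ^ 2) ≤ Real.sqrt (C ^ 2 * ∑ k ∈ s, (f k) ^ 2) :=
        Real.sqrt_le_sqrt h1
    _ = C * Real.sqrt (∑ k ∈ s, (f k) ^ 2) := by
        rw [Real.sqrt_mul (by positivity), Real.sqrt_sq hC]

lemma ex_sub (x y : Fin m → ℝ) (k : ℕ) : ex m (x - y) k = ex m x k - ex m y k := by
  unfold ex; split_ifs with h
  · rfl
  · ring

lemma ex_add (x y : Fin m → ℝ) (k : ℕ) : ex m (x + y) k = ex m x k + ex m y k := by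
  unfold ex; split_ifs with h
  · rfl
  · ring

lemma sqrtQQ_sub (x y : Fin m → ℝ) :
    Real.sqrt (QQ m (x - y)) ≤ Real.sqrt (QQ m x) + Real.sqrt (QQ m y) := by
  have h1 : QQ m (x - y) = ∑ k ∈ Finset.range (m + 1), (DD m x k + -(DD m y k)) ^ 2 := by
    unfold QQ; apply Finset.sum_congr rfl; intro k _
    simp only [DD_def, ex_sub]; ring
  have h2 : QQ m y = ∑ k ∈ Finset.range (m + 1), (-(DD m y k)) ^ 2 := by
    unfold QQ; apply Finset.sum_congr rfl; intro k _; ring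
  rw [h1, h2]
  exact mink _ _ _

lemma sqrtQQ_add (x y : Fin m → ℝ) :
    Real.sqrt (QQ m (x + y)) ≤ Real.sqrt (QQ m x) + Real.sqrt (QQ m y) := by
  have h1 : QQ m (x + y) = ∑ k ∈ Finset.range (m + 1), (DD m x k + DD m y k) ^ 2 := by
    unfold QQ; apply Finset.sum_congr rfl; intro k _
    simp only [DD_def, ex_add]; ring
  rw [h1]
  exact mink _ _ _

lemma sqrtQQ_mul (x y : Fin m → ℝ) :
    Real.sqrt (QQ m (x * y)) ≤
      Real.sqrt ((m + 1 : ℝ) * QQ m x) * Real.sqrt (QQ m y)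
        + Real.sqrt ((m + 1 : ℝ) * QQ m y) * Real.sqrt (QQ m x) := by
  have h1 : QQ m (x * y) = ∑ k ∈ Finset.range (m + 1),
      (ex m x (k + 1) * DD m y k + ex m y k * DD m x k) ^ 2 := by
    unfold QQ; apply Finset.sum_congr rfl; intro k _
    rw [DD_mul]; ring
  rw [h1]
  have hmink := mink (Finset.range (m + 1)) (fun k => ex m x (k + 1) * DD m y k)
    (fun k => ex m y k * DD m x k)
  have hw1 : Real.sqrt (∑ k ∈ Finset.range (m + 1), (ex m x (k + 1) * DD m y k) ^ 2)
      ≤ Real.sqrt ((m + 1 : ℝ) * QQ m x) * Real.sqrt (QQ m y) := by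
    apply weighted _ _ _ _ (Real.sqrt_nonneg _)
    intro k _
    rw [Real.sq_sqrt (by nlinarith [QQ_nonneg x] : (0:ℝ) ≤ (m + 1 : ℝ) * QQ m x)]
    exact ex_sq_le x (k + 1)
  have hw2 : Real.sqrt (∑ k ∈ Finset.range (m + 1), (ex m y k * DD m x k) ^ 2)
      ≤ Real.sqrt ((m + 1 : ℝ) * QQ m y) * Real.sqrt (QQ m x) := by
    apply weighted _ _ _ _ (Real.sqrt_nonneg _)
    intro k _
    rw [Real.sq_sqrt (by nlinarith [QQ_nonneg y] : (0:ℝ) ≤ (m + 1 : ℝ) * QQ m y)]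
    exact ex_sq_le y k
  calc Real.sqrt (∑ k ∈ Finset.range (m + 1),
        (ex m x (k + 1) * DD m y k + ex m y k * DD m x k) ^ 2)
      ≤ _ + _ := hmink
    _ ≤ _ := add_le_add hw1 hw2

lemma key (m : ℕ) (a b : Fin m → ℝ) :
    Real.sqrt (QQ m ((a - b) * (a * a + a * b + b * b) - (a - b))) ≤
      (1 + 6 * (m + 1 : ℝ) * (QQ m a + QQ m b)) * Real.sqrt (QQ m (a - b)) := by
  set u := a - b with hu
  set p := a * a + a * b + b * b with hp
  set α := Real.sqrt (QQ m a) with hα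
  set β := Real.sqrt (QQ m b) with hβ
  set υ := Real.sqrt (QQ m u) with hυ
  set sN := Real.sqrt ((m + 1 : ℝ)) with hsN
  have hα0 : 0 ≤ α := Real.sqrt_nonneg _
  have hβ0 : 0 ≤ β := Real.sqrt_nonneg _
  have hυ0 : 0 ≤ υ := Real.sqrt_nonneg _
  have hsN0 : 0 ≤ sN := Real.sqrt_nonneg _
  have hα2 : α ^ 2 = QQ m a := Real.sq_sqrt (QQ_nonneg a)
  have hβ2 : β ^ 2 = QQ m b := Real.sq_sqrt (QQ_nonneg b)
  have hsN2 : sN ^ 2 = (m + 1 : ℝ) := Real.sq_sqrt (by positivity)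
  have hmulN : ∀ z : Fin m → ℝ, Real.sqrt ((m + 1 : ℝ) * QQ m z) = sN * Real.sqrt (QQ m z) :=
    fun z => Real.sqrt_mul (by positivity) _
  -- bound on √(QQ p)
  have haa : Real.sqrt (QQ m (a * a)) ≤ sN * α * α + sN * α * α := by
    have := sqrtQQ_mul a a; rwa [hmulN] at this
  have hab : Real.sqrt (QQ m (a * b)) ≤ sN * α * β + sN * β * α := by
    have := sqrtQQ_mul a b; rwa [hmulN, hmulN] at this
  have hbb : Real.sqrt (QQ m (b * b)) ≤ sN * β * β + sN * β * β := by
    have := sqrtQQ_mul b b; rwa [hmulN] at this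
  have hpsplit : Real.sqrt (QQ m p) ≤
      Real.sqrt (QQ m (a * a)) + Real.sqrt (QQ m (a * b)) + Real.sqrt (QQ m (b * b)) := by
    rw [hp]
    calc Real.sqrt (QQ m (a * a + a * b + b * b))
        ≤ Real.sqrt (QQ m (a * a + a * b)) + Real.sqrt (QQ m (b * b)) := sqrtQQ_add _ _
      _ ≤ Real.sqrt (QQ m (a * a)) + Real.sqrt (QQ m (a * b)) + Real.sqrt (QQ m (b * b)) := by
          have := sqrtQQ_add (a * a) (a * b); linarith
  have hP : Real.sqrt (QQ m p) ≤ 3 * sN * (α ^ 2 + β ^ 2) := by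
    nlinarith [mul_nonneg hsN0 (sq_nonneg (α - β))]
  -- bound on √(QQ (u * p))
  have h1 := sqrtQQ_mul u p
  rw [hmulN, hmulN] at h1
  have hup : Real.sqrt (QQ m (u * p)) ≤ 6 * (m + 1 : ℝ) * (QQ m a + QQ m b) * υ := by
    calc Real.sqrt (QQ m (u * p))
        ≤ sN * υ * Real.sqrt (QQ m p) + sN * Real.sqrt (QQ m p) * υ := h1
      _ = 2 * (sN * υ) * Real.sqrt (QQ m p) := by ring
      _ ≤ 2 * (sN * υ) * (3 * sN * (α ^ 2 + β ^ 2)) := by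
          apply mul_le_mul_of_nonneg_left hP
          exact mul_nonneg (by norm_num) (mul_nonneg hsN0 hυ0)
      _ = 6 * sN ^ 2 * (α ^ 2 + β ^ 2) * υ := by ring
      _ = 6 * (m + 1 : ℝ) * (QQ m a + QQ m b) * υ := by rw [hsN2, hα2, hβ2]
  have hfinal : Real.sqrt (QQ m (u * p - u)) ≤ Real.sqrt (QQ m (u * p)) + υ := sqrtQQ_sub _ _
  calc Real.sqrt (QQ m (u * p - u)) ≤ Real.sqrt (QQ m (u * p)) + υ := hfinal
    _ ≤ 6 * (m + 1 : ℝ) * (QQ m a + QQ m b) * υ + υ := by linarith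
    _ = (1 + 6 * (m + 1 : ℝ) * (QQ m a + QQ m b)) * υ := by ring

lemma collapse (x : Fin m → ℝ) (c : ℕ) :
    ∑ j : Fin m, (if (j : ℕ) = c then x j else 0) = ex m x (c + 1) := by
  by_cases h : c < m
  · rw [Finset.sum_eq_single (⟨c, h⟩ : Fin m)]
    · rw [if_pos rfl]
      unfold ex
      rw [dif_pos ⟨by omega, by omega⟩]
      congr 1
    · intro j _ hj
      rw [if_neg]
      intro hjc
      exact hj (Fin.ext hjc)
    · intro habs; exact absurd (Finset.mem_univ _) habs
  · rw [Finset.sum_eq_zero, ex_big x (by omega)]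
    intro j _
    rw [if_neg]
    have := j.isLt
    omega

lemma collapse' (x : Fin m → ℝ) (c : ℕ) :
    ∑ j : Fin m, (if (j : ℕ) + 1 = c then x j else 0) = ex m x c := by
  cases c with
  | zero =>
      rw [ex_zero]
      apply Finset.sum_eq_zero
      intro j _
      rw [if_neg]
      omega
  | succ c' =>
      rw [← collapse x c']
      apply Finset.sum_congr rfl
      intro j _
      split_ifs with h1 h2 <;> first | rfl | omega

lemma inner_sum (n : ℕ) (x : Fin (n - 1) → ℝ) (i : Fin (n - 1)) :
    ((-(disLap n)) *ᵥ x) i = ((n : ℝ) ^ 2 / Real.pi ^ 2) *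
      (2 * x i - ex (n - 1) x (i : ℕ) - ex (n - 1) x ((i : ℕ) + 2)) := by
  have hstep : ∀ j : Fin (n - 1),
      (-(disLap n)) i j * x j = ((n : ℝ) ^ 2 / Real.pi ^ 2) *
        ((if (j : ℕ) = (i : ℕ) then 2 * x j else 0)
          - (if (j : ℕ) = (i : ℕ) + 1 then x j else 0)
          - (if (j : ℕ) + 1 = (i : ℕ) then x j else 0)) := by
    intro j
    simp only [disLap, Matrix.neg_apply, Matrix.of_apply]
    split_ifs <;> first | (exfalso; omega) | ring
  show ∑ j, (-(disLap n)) i j * x j = _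
  rw [Finset.sum_congr rfl fun j _ => hstep j, ← Finset.mul_sum]
  congr 1
  rw [Finset.sum_sub_distrib, Finset.sum_sub_distrib]
  have e1 : ∑ j : Fin (n-1), (if (j : ℕ) = (i : ℕ) then 2 * x j else 0)
      = 2 * x i := by
    rw [collapse (fun j => 2 * x j) (i : ℕ), ex_val]
  have e2 : ∑ j : Fin (n-1), (if (j : ℕ) = (i : ℕ) + 1 then x j else 0)
      = ex (n - 1) x ((i : ℕ) + 2) := collapse x ((i : ℕ) + 1)
  have e3 : ∑ j : Fin (n-1), (if (j : ℕ) + 1 = (i : ℕ) then x j else 0)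
      = ex (n - 1) x (i : ℕ) := collapse' x (i : ℕ)
  rw [e1, e2, e3]
  ring

lemma sumA (x : Fin m → ℝ) :
    ∑ k ∈ Finset.range (m + 1), (ex m x (k + 1)) ^ 2 = ∑ i, (x i) ^ 2 := by
  rw [Finset.sum_range_succ, ex_big x (by omega), ← Fin.sum_univ_eq_sum_range
    (fun k => (ex m x (k + 1)) ^ 2) m]
  simp only [ex_val]
  norm_num

lemma sumB (x : Fin m → ℝ) :
    ∑ k ∈ Finset.range (m + 1), (ex m x k) ^ 2 = ∑ i, (x i) ^ 2 := by
  rw [Finset.sum_range_succ' (fun k => (ex m x k) ^ 2) m, ex_zero]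
  rw [← Fin.sum_univ_eq_sum_range (fun k => (ex m x (k + 1)) ^ 2) m]
  simp only [ex_val]
  norm_num

lemma sumC (x : Fin m → ℝ) :
    ∑ k ∈ Finset.range (m + 1), ex m x (k + 1) * ex m x k
      = ∑ i, x i * ex m x (i : ℕ) := by
  rw [Finset.sum_range_succ, ex_big x (m := m) (by omega), ← Fin.sum_univ_eq_sum_range
    (fun k => ex m x (k + 1) * ex m x k) m]
  simp only [ex_val]
  norm_num

lemma sumD (x : Fin m → ℝ) :
    ∑ k ∈ Finset.range (m + 1), ex m x (k + 1) * ex m x k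
      = ∑ i, x i * ex m x ((i : ℕ) + 2) := by
  rw [Finset.sum_range_succ' (fun k => ex m x (k + 1) * ex m x k) m, ex_zero]
  rw [← Fin.sum_univ_eq_sum_range (fun k => ex m x (k + 1 + 1) * ex m x (k + 1)) m]
  simp only [ex_val]
  have : ∀ i : Fin m, ex m x ((i : ℕ) + 1 + 1) * x i = x i * ex m x ((i : ℕ) + 2) := by
    intro i; rw [mul_comm]
  rw [Finset.sum_congr rfl fun i _ => this i]
  norm_num

lemma QQ_eq (x : Fin m → ℝ) :
    QQ m x = ∑ i, x i * (2 * x i - ex m x (i : ℕ) - ex m x ((i : ℕ) + 2)) := by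
  have hexp : QQ m x = (∑ k ∈ Finset.range (m + 1), (ex m x (k + 1)) ^ 2)
      + (∑ k ∈ Finset.range (m + 1), (ex m x k) ^ 2)
      - 2 * ∑ k ∈ Finset.range (m + 1), ex m x (k + 1) * ex m x k := by
    unfold QQ
    rw [Finset.mul_sum, ← Finset.sum_add_distrib, ← Finset.sum_sub_distrib]
    apply Finset.sum_congr rfl
    intro k _
    simp only [DD_def]
    ring
  have hsplit : ∑ i, x i * (2 * x i - ex m x (i : ℕ) - ex m x ((i : ℕ) + 2))
      = 2 * (∑ i, (x i) ^ 2) - (∑ i, x i * ex m x (i : ℕ))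
        - (∑ i, x i * ex m x ((i : ℕ) + 2)) := by
    rw [Finset.mul_sum, ← Finset.sum_sub_distrib, ← Finset.sum_sub_distrib]
    apply Finset.sum_congr rfl
    intro i _
    ring
  rw [hexp, hsplit, sumA, sumB]
  have h1 := sumC x
  have h2 := sumD x
  linarith

lemma dot_eq (n : ℕ) (x : Fin (n - 1) → ℝ) :
    x ⬝ᵥ ((-(disLap n)) *ᵥ x) = ((n : ℝ) ^ 2 / Real.pi ^ 2) * QQ (n - 1) x := by
  unfold dotProduct
  rw [QQ_eq, Finset.mul_sum]
  apply Finset.sum_congr rfl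
  intro i _
  rw [inner_sum]
  ring

lemma sumsq_S (n : ℕ) (S : Matrix (Fin (n - 1)) (Fin (n - 1)) ℝ) (hS : S.PosDef)
    (hSS : S * S = -(disLap n)) (x : Fin (n - 1) → ℝ) :
    ∑ i, ((S.mulVec x) i) ^ 2 = ((n : ℝ) ^ 2 / Real.pi ^ 2) * QQ (n - 1) x := by
  have hsym : Sᵀ = S := by
    have h := hS.isHermitian.eq
    rwa [Matrix.conjTranspose_eq_transpose_of_trivial] at h
  have h1 : ∑ i, ((S.mulVec x) i) ^ 2 = (S.mulVec x) ⬝ᵥ (S.mulVec x) := by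
    unfold dotProduct
    apply Finset.sum_congr rfl
    intro i _
    ring
  have h2 : (S.mulVec x) ᵥ* S = (S * S) *ᵥ x := by
    rw [← Matrix.mulVec_transpose, hsym, Matrix.mulVec_mulVec]
  rw [h1, Matrix.dotProduct_mulVec, h2, hSS, dotProduct_comm, dot_eq]

end Stmt9A

/-- There is a constant `C > 0`, independent of `n`, such that for every `n ≥ 2`, all
`a, b ∈ ℝ^{n-1}`, and `S = (-A_n)^{1/2}` the (unique) symmetric positive definite square
root of `-A_n`:
`‖(-A_n)^{1/2}(F_n(a) - F_n(b))‖_{l²_n}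
  ≤ C (1 + ‖(-A_n)^{1/2} a‖²_{l²_n} + ‖(-A_n)^{1/2} b‖²_{l²_n}) ‖(-A_n)^{1/2}(a-b)‖_{l²_n}`. -/
theorem stmt9 :
    ∃ C : ℝ, 0 < C ∧ ∀ n : ℕ, 2 ≤ n → ∀ a b : Fin (n - 1) → ℝ,
      ∀ S : Matrix (Fin (n - 1)) (Fin (n - 1)) ℝ, S.PosDef → S * S = -(disLap n) →
        l2n n (S.mulVec (Fn n a - Fn n b))
          ≤ C * (1 + (l2n n (S.mulVec a)) ^ 2 + (l2n n (S.mulVec b)) ^ 2)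
              * l2n n (S.mulVec (a - b)) := by
  refine ⟨100, by norm_num, ?_⟩
  intro n hn a b S hS hSS
  have hπ : (0:ℝ) < Real.pi := Real.pi_pos
  have hn0 : (0:ℝ) < (n:ℝ) := by exact_mod_cast Nat.pos_of_ne_zero (by omega)
  have hl2 : ∀ x : Fin (n - 1) → ℝ, l2n n (S.mulVec x)
      = Real.sqrt ((n : ℝ) / Real.pi) * Real.sqrt (Stmt9A.QQ (n - 1) x) := by
    intro x
    unfold l2n
    rw [Stmt9A.sumsq_S n S hS hSS x]
    rw [show (Real.pi / (n:ℝ)) * (((n:ℝ) ^ 2 / Real.pi ^ 2) * Stmt9A.QQ (n - 1) x)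
        = ((n:ℝ) / Real.pi) * Stmt9A.QQ (n - 1) x by field_simp]
    exact Real.sqrt_mul (by positivity) _
  have hw : Fn n a - Fn n b = (a - b) * (a * a + a * b + b * b) - (a - b) := by
    funext i
    simp only [Fn, Pi.sub_apply, Pi.mul_apply, Pi.add_apply]
    ring
  rw [hw]
  simp only [hl2]
  have hsq : ∀ x : Fin (n - 1) → ℝ,
      (Real.sqrt ((n : ℝ) / Real.pi) * Real.sqrt (Stmt9A.QQ (n - 1) x)) ^ 2
        = ((n:ℝ) / Real.pi) * Stmt9A.QQ (n - 1) x := by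
    intro x
    rw [mul_pow, Real.sq_sqrt (by positivity), Real.sq_sqrt (Stmt9A.QQ_nonneg x)]
  rw [hsq, hsq]
  have hkey := Stmt9A.key (n - 1) a b
  set Qa := Stmt9A.QQ (n - 1) a with hQa
  set Qb := Stmt9A.QQ (n - 1) b with hQb
  set υ := Real.sqrt (Stmt9A.QQ (n - 1) (a - b)) with hυ
  have hQa0 : 0 ≤ Qa := Stmt9A.QQ_nonneg a
  have hQb0 : 0 ≤ Qb := Stmt9A.QQ_nonneg b
  have hυ0 : 0 ≤ υ := Real.sqrt_nonneg _
  have hcast : ((n - 1 : ℕ) : ℝ) + 1 = (n : ℝ) := by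
    have h1 : (1:ℕ) ≤ n := by omega
    push_cast [Nat.cast_sub h1]
    ring
  rw [hcast] at hkey
  have hdiv : (n : ℝ) / 4 ≤ (n : ℝ) / Real.pi :=
    div_le_div_of_nonneg_left hn0.le hπ Real.pi_le_four
  have hcoef : 1 + 6 * (n : ℝ) * (Qa + Qb)
      ≤ 100 * (1 + (n : ℝ) / Real.pi * Qa + (n : ℝ) / Real.pi * Qb) := by
    nlinarith [mul_le_mul_of_nonneg_right hdiv hQa0, mul_le_mul_of_nonneg_right hdiv hQb0,
      mul_nonneg hn0.le hQa0, mul_nonneg hn0.le hQb0]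
  have hs0 : 0 ≤ Real.sqrt ((n : ℝ) / Real.pi) := Real.sqrt_nonneg _
  calc Real.sqrt ((n : ℝ) / Real.pi)
        * Real.sqrt (Stmt9A.QQ (n - 1) ((a - b) * (a * a + a * b + b * b) - (a - b)))
      ≤ Real.sqrt ((n : ℝ) / Real.pi) * ((1 + 6 * (n : ℝ) * (Qa + Qb)) * υ) :=
        mul_le_mul_of_nonneg_left hkey hs0
    _ ≤ Real.sqrt ((n : ℝ) / Real.pi)
        * ((100 * (1 + (n : ℝ) / Real.pi * Qa + (n : ℝ) / Real.pi * Qb)) * υ) := by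
        apply mul_le_mul_of_nonneg_left _ hs0
        exact mul_le_mul_of_nonneg_right hcoef hυ0
    _ = 100 * (1 + (n : ℝ) / Real.pi * Qa + (n : ℝ) / Real.pi * Qb)
        * (Real.sqrt ((n : ℝ) / Real.pi) * υ) := by ring
end
end
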